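/- arXiv:1203.0105 — 4 statements merged into one kernel-verified Lean document; each statement's English description precedes it below -/
import Mathlib

section
/- Let V' be an n'-dimensional left vector space over a division ring R' and let J ⊆ G_{k'}(V') be a J(n,k)-subset with 1 < k < n−k. If J is of first type, then for every star C of Γ_{k'}(V') with |J ∩ C| ≥ 2 one has |J ∩ C| = n−k+1, and for every top C of Γ_{k'}(V') with |J ∩ C| ≥ 2 one has |J ∩ C| = k+1. If J is of second type, then for every star C with |J ∩ C| ≥ 2 one has |J ∩ C| = k+1, and for every top C with |J ∩ C| ≥ 2 one has |J ∩ C| = n−k+1. -/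
/-!
Both types of `J(n,k)`-subsets are images of a map `f` from subsets of `Fin n` into a lattice with
a strictly monotone modular rank `ρ`: subspaces under inclusion with `ρ = finrank` for the first
type, and subspaces under reverse inclusion with `ρ = -finrank` for the second. The map sends
unions to joins and satisfies `ρ (f T) = c + |T|` for `|T| ≤ 2k`; by modularity it then also sends
intersections to meets and reflects inclusion. If two members `f A ≠ f B` of `J` lie above `S`
with `ρ S = c + k - 1`, ranks force `S = f (A ∩ B)`, so the members above `S` are the `f A` with
`A ∩ B ⊆ A`: there are `n - k + 1` of them. Dually, two members below `U` with `ρ U = c + k + 1`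
force `U = f (A ∪ B)`, and the members below `U` are the `k + 1` sets `f A` with `A ⊆ A ∪ B`.
Reversing the order exchanges the two cases, which is why the counts swap for the second type.
-/

open Submodule Set Function Module

/-- The Grassmannian of `k`-dimensional subspaces of `V`. -/
def Grass (R V : Type*) [DivisionRing R] [AddCommGroup V] [Module R V] (k : ℕ) : Type _ :=
  {P : Submodule R V // Module.finrank R ↥P = k}

/-- The Grassmann graph `Γ_k(V)`: two `k`-dimensional subspaces are adjacent iff their
intersection is `(k-1)`-dimensional. -/
def grassGraph (R V : Type*) [DivisionRing R] [AddCommGroup V] [Module R V] (k : ℕ) :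
    SimpleGraph (Grass R V k) where
  Adj P Q := P ≠ Q ∧ Module.finrank R ↥(P.1 ⊓ Q.1) = k - 1
  symm := by
    constructor
    intro P Q h
    exact ⟨h.1.symm, by rw [inf_comm]; exact h.2⟩
  loopless := by
    constructor
    intro P h
    exact h.1 rfl

/-- Vertices of the Johnson graph: `k`-element subsets of `{1, …, n}`. -/
abbrev JVertex (n k : ℕ) := {A : Finset (Fin n) // A.card = k}

/-- The Johnson graph `J(n,k)`: two `k`-element subsets are adjacent iff their
intersection has `k-1` elements. -/
def johnsonGraph (n k : ℕ) : SimpleGraph (JVertex n k) where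
  Adj A B := A ≠ B ∧ (A.1 ∩ B.1).card = k - 1
  symm := by
    constructor
    intro A B h
    exact ⟨h.1.symm, by rw [Finset.inter_comm]; exact h.2⟩
  loopless := by
    constructor
    intro A h
    exact h.1 rfl

/-- A family of vectors is `m`-independent if every `m`-element subfamily is
linearly independent. -/
def MIndep (R : Type*) {W : Type*} [DivisionRing R] [AddCommGroup W] [Module R W]
    {n : ℕ} (m : ℕ) (x : Fin n → W) : Prop :=
  ∀ A : Finset (Fin n), A.card = m → LinearIndependent R (fun i : A => x (i : Fin n))

/-- `J_k(X)`: the set of all `k`-dimensional subspaces spanned by `k`-element subsets of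
the family `x`. -/
def JkSet (R : Type*) {W : Type*} [DivisionRing R] [AddCommGroup W] [Module R W]
    {n : ℕ} (k : ℕ) (x : Fin n → W) : Set (Submodule R W) :=
  {P | ∃ A : Finset (Fin n), A.card = k ∧ P = Submodule.span R (x '' ↑A)}

/-- Apartments of `G_k(V)`: the sets of `k`-dimensional subspaces spanned by subsets
of a base of the `n`-dimensional space `V`. -/
def IsApartment (R V : Type*) [DivisionRing R] [AddCommGroup V] [Module R V]
    (n k : ℕ) (𝒜 : Set (Grass R V k)) : Prop :=
  ∃ b : Basis (Fin n) R V, 𝒜 = {P : Grass R V k | P.1 ∈ JkSet R k ⇑b}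

/-- A `J(n,k)`-subset of `G_{k'}(V')`: the image of an isometric embedding of the Johnson
graph `J(n,k)` in the Grassmann graph `Γ_{k'}(V')`. -/
def IsJSubset (R' V' : Type*) [DivisionRing R'] [AddCommGroup V'] [Module R' V']
    (n k k' : ℕ) (J : Set (Grass R' V' k')) : Prop :=
  ∃ g : JVertex n k → Grass R' V' k',
    Function.Injective g ∧
    (∀ A B : JVertex n k,
      (grassGraph R' V' k').dist (g A) (g B) = (johnsonGraph n k).dist A B) ∧
    Set.range g = J

/-- A `J`-mapping: a mapping transferring every apartment of `G_k(V)` to a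
`J(n,k)`-subset of `G_{k'}(V')`. -/
def IsJMapping (R V R' V' : Type*) [DivisionRing R] [AddCommGroup V] [Module R V]
    [DivisionRing R'] [AddCommGroup V'] [Module R' V'] (n k k' : ℕ)
    (f : Grass R V k → Grass R' V' k') : Prop :=
  ∀ 𝒜 : Set (Grass R V k), IsApartment R V n k 𝒜 → IsJSubset R' V' n k k' (f '' 𝒜)

/-- A `J(n,k)`-subset of first type: there are `S ∈ G_{k'-k}(V')` and a `(2k)`-independent
`n`-element family `x` in `V'/S` such that the subset consists of the preimages in `V'`
of the members of `J_k(X)`. -/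
def IsFirstType (R' V' : Type*) [DivisionRing R'] [AddCommGroup V'] [Module R' V']
    (n k k' : ℕ) (J : Set (Grass R' V' k')) : Prop :=
  ∃ S : Submodule R' V', Module.finrank R' ↥S = k' - k ∧
    ∃ x : Fin n → (V' ⧸ S), Function.Injective x ∧ MIndep R' (2 * k) x ∧
      J = {P : Grass R' V' k' | ∃ A : Finset (Fin n), A.card = k ∧
        P.1 = Submodule.comap S.mkQ (Submodule.span R' (x '' ↑A))}

/-- A `J(n,k)`-subset of second type: there are `U ∈ G_{k'+k}(V')` and a `(2k)`-independent
`n`-element family `y` of linear functionals on `U` such that the subset consists of the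
annihilators in `U` of the members of `J_k(Y)` (i.e. the intersections of `k` distinct
kernels of the `y i`). -/
def IsSecondType (R' V' : Type*) [DivisionRing R'] [AddCommGroup V'] [Module R' V']
    (n k k' : ℕ) (J : Set (Grass R' V' k')) : Prop :=
  ∃ U : Submodule R' V', Module.finrank R' ↥U = k' + k ∧
    ∃ y : Fin n → (↥U →ₗ[R'] R'), Function.Injective y ∧ MIndep R'ᵐᵒᵖ (2 * k) y ∧
      J = {P : Grass R' V' k' | ∃ A : Finset (Fin n), A.card = k ∧
        P.1 = Submodule.map U.subtype (⨅ i ∈ A, LinearMap.ker (y i))}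

theorem Finset.card_inter_lt_of_card_eq_of_ne {ι : Type*} [DecidableEq ι] {A B : Finset ι}
    (hAB : A.card = B.card) (hne : A ≠ B) : (A ∩ B).card < A.card := by
  refine Finset.card_lt_card
    (Finset.ssubset_iff_subset_ne.2 ⟨Finset.inter_subset_left, fun h => hne ?_⟩)
  exact Finset.eq_of_subset_of_card_le (h ▸ Finset.inter_subset_right) hAB.ge

theorem Finset.ncard_setOf_card_eq_succ_superset {ι : Type*} [Fintype ι] [DecidableEq ι]
    (D : Finset ι) :
    {A : Finset ι | A.card = D.card + 1 ∧ D ⊆ A}.ncard = Fintype.card ι - D.card := by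
  have hset : {A : Finset ι | A.card = D.card + 1 ∧ D ⊆ A} = (insert · D) '' ↑Dᶜ := by
    ext A
    simp only [Set.mem_ofPred_eq, Set.mem_image, Finset.coe_compl, Set.mem_compl_iff,
      Finset.mem_coe]
    constructor
    · rintro ⟨hA, hDA⟩
      obtain ⟨i, hi⟩ := Finset.card_eq_one.1 (by rw [Finset.card_sdiff_of_subset hDA]; omega :
        (A \ D).card = 1)
      refine ⟨i, (Finset.mem_sdiff.1 (hi ▸ Finset.mem_singleton_self i)).2, ?_⟩
      rw [Finset.insert_eq, ← hi, Finset.sdiff_union_of_subset hDA]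
    · rintro ⟨i, hi, rfl⟩
      exact ⟨Finset.card_insert_of_notMem hi, Finset.subset_insert i D⟩
  have hinj : Set.InjOn (insert · D) ↑Dᶜ := fun i hi j _ h =>
    (Finset.insert_inj (by simpa using hi)).1 h
  rw [hset, hinj.ncard_image, Set.ncard_coe_finset, Finset.card_compl]

theorem Finset.ncard_setOf_card_eq_subset {ι : Type*} (E : Finset ι) (k : ℕ) :
    {A : Finset ι | A.card = k ∧ A ⊆ E}.ncard = E.card.choose k := by
  have hset : {A : Finset ι | A.card = k ∧ A ⊆ E} = ↑(E.powersetCard k) := by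
    ext A
    simp [Finset.mem_powersetCard, and_comm]
  rw [hset, Set.ncard_coe_finset, Finset.card_powersetCard]

theorem StrictMono.eq_of_le_of_apply_le {α β : Type*} [PartialOrder α] [Preorder β] {f : α → β}
    (hf : StrictMono f) {x y : α} (hxy : x ≤ y) (hfxy : f y ≤ f x) : x = y :=
  hxy.eq_of_not_lt fun hlt => (hf hlt).not_ge hfxy

structure IsModularRank {β : Type*} [Lattice β] (ρ : β → ℤ) : Prop where
  strictMono : StrictMono ρ
  sup_add_inf : ∀ x y, ρ (x ⊔ y) + ρ (x ⊓ y) = ρ x + ρ y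

/-- Modelled on `T ↦ span {x i | i ∈ T}` for an `m`-independent family `x`, where `ρ = finrank`
and `c = 0`. -/
structure IsFreeSpan {β ι : Type*} [Lattice β] [DecidableEq ι] (ρ : β → ℤ) (c : ℤ) (m : ℕ)
    (f : Finset ι → β) : Prop where
  map_union : ∀ A B, f (A ∪ B) = f A ⊔ f B
  rank_map : ∀ T : Finset ι, T.card ≤ m → ρ (f T) = c + T.card

namespace IsFreeSpan

variable {β ι : Type*} [Lattice β] [DecidableEq ι] {ρ : β → ℤ} {c : ℤ} {m k : ℕ}
  {f : Finset ι → β}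

theorem monotone (hf : IsFreeSpan ρ c m f) : Monotone f := fun A B h => by
  rw [← Finset.union_eq_right.2 h, hf.map_union]
  exact le_sup_left

theorem map_inter (hρ : IsModularRank ρ) (hf : IsFreeSpan ρ c m f) {A B : Finset ι}
    (hAB : (A ∪ B).card ≤ m) : f (A ∩ B) = f A ⊓ f B := by
  refine hρ.strictMono.eq_of_le_of_apply_le (le_inf (hf.monotone Finset.inter_subset_left)
    (hf.monotone Finset.inter_subset_right)) ?_
  have hA := (Finset.card_le_card (Finset.subset_union_left (s₂ := B))).trans hAB
  have hB := (Finset.card_le_card (Finset.subset_union_right (s₁ := A))).trans hAB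
  have hmod := hρ.sup_add_inf (f A) (f B)
  rw [← hf.map_union, hf.rank_map _ hAB, hf.rank_map _ hA, hf.rank_map _ hB] at hmod
  rw [hf.rank_map _ ((Finset.card_le_card Finset.inter_subset_left).trans hA)]
  have := Finset.card_union_add_card_inter A B
  omega

theorem le_iff_subset (hρ : IsModularRank ρ) (hf : IsFreeSpan ρ c m f) {A B : Finset ι}
    (hB : B.card < m) : f A ≤ f B ↔ A ⊆ B := by
  refine ⟨fun h i hiA => by_contra fun hiB => ?_, fun h => hf.monotone h⟩
  have hunion : ({i} ∪ B).card ≤ m :=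
    (Finset.card_union_le _ _).trans (by rw [Finset.card_singleton]; omega)
  have hi : f {i} = f ∅ := by
    rw [← Finset.singleton_inter_of_notMem hiB, hf.map_inter hρ hunion,
      inf_eq_left.2 ((hf.monotone (Finset.singleton_subset_iff.2 hiA)).trans h)]
  have := congrArg ρ hi
  rw [hf.rank_map _ (by rw [Finset.card_singleton]; omega),
    hf.rank_map _ (by rw [Finset.card_empty]; omega)] at this
  simp at this

theorem injOn (hρ : IsModularRank ρ) (hf : IsFreeSpan ρ c m f) (hk : k < m) :
    Set.InjOn f {A | A.card = k} := fun _ hA _ hB h =>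
  Finset.Subset.antisymm ((hf.le_iff_subset hρ (hB.symm ▸ hk)).1 h.le)
    ((hf.le_iff_subset hρ (hA.symm ▸ hk)).1 h.ge)

theorem eq_map_inter_of_le (hρ : IsModularRank ρ) (hf : IsFreeSpan ρ c m f) (h2k : 2 * k ≤ m)
    {S : β} (hS : ρ S + 1 = c + k) {A B : Finset ι} (hA : A.card = k) (hB : B.card = k)
    (hAB : A ≠ B) (hSA : S ≤ f A) (hSB : S ≤ f B) : (A ∩ B).card + 1 = k ∧ S = f (A ∩ B) := by
  have hunion : (A ∪ B).card ≤ m := (Finset.card_union_le A B).trans (by omega)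
  have hle : S ≤ f (A ∩ B) := hf.map_inter hρ hunion ▸ le_inf hSA hSB
  have hlt := Finset.card_inter_lt_of_card_eq_of_ne (hA.trans hB.symm) hAB
  have hrank := hρ.strictMono.monotone hle
  rw [hf.rank_map _ (by omega)] at hrank
  have hcard : (A ∩ B).card + 1 = k := by omega
  refine ⟨hcard, hρ.strictMono.eq_of_le_of_apply_le hle ?_⟩
  rw [hf.rank_map _ (by omega)]
  omega

theorem eq_map_union_of_le (hρ : IsModularRank ρ) (hf : IsFreeSpan ρ c m f) (h2k : 2 * k ≤ m)
    {U : β} (hU : ρ U = c + k + 1) {A B : Finset ι} (hA : A.card = k) (hB : B.card = k)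
    (hAB : A ≠ B) (hAU : f A ≤ U) (hBU : f B ≤ U) : (A ∪ B).card = k + 1 ∧ f (A ∪ B) = U := by
  have hunion : (A ∪ B).card ≤ m := (Finset.card_union_le A B).trans (by omega)
  have hle : f (A ∪ B) ≤ U := hf.map_union A B ▸ sup_le hAU hBU
  have hlt := Finset.card_inter_lt_of_card_eq_of_ne (hA.trans hB.symm) hAB
  have hrank := hρ.strictMono.monotone hle
  rw [hf.rank_map _ hunion] at hrank
  have hcard : (A ∪ B).card = k + 1 := by
    have := Finset.card_union_add_card_inter A B
    omega
  refine ⟨hcard, hρ.strictMono.eq_of_le_of_apply_le hle ?_⟩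
  rw [hf.rank_map _ hunion]
  omega

variable [Fintype ι]

theorem ncard_star (hρ : IsModularRank ρ) (hf : IsFreeSpan ρ c m f) (h2k : 2 * k ≤ m) {S : β}
    (hS : ρ S + 1 = c + k) (h2 : 2 ≤ {A : Finset ι | A.card = k ∧ S ≤ f A}.ncard) :
    {A : Finset ι | A.card = k ∧ S ≤ f A}.ncard = Fintype.card ι - k + 1 := by
  obtain ⟨A, B, ⟨hA, hSA⟩, ⟨hB, hSB⟩, hAB⟩ := (Set.one_lt_ncard_iff (Set.toFinite _)).1 h2
  obtain ⟨hD, rfl⟩ := hf.eq_map_inter_of_le hρ h2k hS hA hB hAB hSA hSB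
  have hset : {A' : Finset ι | A'.card = k ∧ f (A ∩ B) ≤ f A'} =
      {A' | A'.card = (A ∩ B).card + 1 ∧ A ∩ B ⊆ A'} := by
    ext A'
    simp only [Set.mem_ofPred_eq, hD]
    exact and_congr_right fun hA' => hf.le_iff_subset hρ (by omega)
  have := Finset.card_le_univ A
  rw [hset, Finset.ncard_setOf_card_eq_succ_superset]
  omega

theorem ncard_top (hρ : IsModularRank ρ) (hf : IsFreeSpan ρ c m f) (h2k : 2 * k ≤ m)
    (hkm : k + 2 ≤ m) {U : β} (hU : ρ U = c + k + 1)
    (h2 : 2 ≤ {A : Finset ι | A.card = k ∧ f A ≤ U}.ncard) :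
    {A : Finset ι | A.card = k ∧ f A ≤ U}.ncard = k + 1 := by
  obtain ⟨A, B, ⟨hA, hAU⟩, ⟨hB, hBU⟩, hAB⟩ := (Set.one_lt_ncard_iff (Set.toFinite _)).1 h2
  obtain ⟨hE, rfl⟩ := hf.eq_map_union_of_le hρ h2k hU hA hB hAB hAU hBU
  have hset : {A' : Finset ι | A'.card = k ∧ f A' ≤ f (A ∪ B)} =
      {A' | A'.card = k ∧ A' ⊆ A ∪ B} := by
    ext A'
    exact and_congr_right fun _ => hf.le_iff_subset hρ (by omega)
  rw [hset, Finset.ncard_setOf_card_eq_subset, hE, Nat.choose_succ_self_right]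

end IsFreeSpan

theorem MIndep.linearIndepOn {R W : Type*} [DivisionRing R] [AddCommGroup W] [Module R W]
    {n m : ℕ} {x : Fin n → W} (hx : MIndep R m x) (hmn : m ≤ n) {T : Finset (Fin n)}
    (hT : T.card ≤ m) : LinearIndepOn R x ↑T := by
  obtain ⟨B, hTB, hB⟩ := Finset.exists_superset_card_eq hT (by simpa using hmn)
  exact LinearIndepOn.mono (hx B hB) (Finset.coe_subset.2 hTB)

section LinearAlgebra

variable {R V : Type*} [DivisionRing R] [AddCommGroup V] [Module R V]

theorem LinearIndepOn.finrank_span_image {ι : Type*} {x : ι → V} {T : Finset ι}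
    (hx : LinearIndepOn R x ↑T) : finrank R (span R (x '' ↑T)) = T.card := by
  rw [Set.image_eq_range, finrank_span_eq_card hx]
  simp

theorem Submodule.comap_mkQ_sup (S : Submodule R V) (p q : Submodule R (V ⧸ S)) :
    comap S.mkQ (p ⊔ q) = comap S.mkQ p ⊔ comap S.mkQ q := by
  conv_lhs => rw [← map_comap_eq_of_surjective S.mkQ_surjective p,
    ← map_comap_eq_of_surjective S.mkQ_surjective q, ← map_sup]
  exact comap_map_eq_self (le_sup_of_le_left (LinearMap.ker_le_comap _))

theorem Submodule.finrank_comap_mkQ [FiniteDimensional R V] (S : Submodule R V)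
    (W : Submodule R (V ⧸ S)) : finrank R (comap S.mkQ W) = finrank R S + finrank R W := by
  have h := LinearMap.finrank_range_add_finrank_ker (W.mkQ ∘ₗ S.mkQ)
  have hsurj : Surjective (W.mkQ ∘ₗ S.mkQ) := by
    rw [LinearMap.coe_comp]
    exact W.mkQ_surjective.comp S.mkQ_surjective
  rw [LinearMap.range_eq_top.2 hsurj, finrank_top, LinearMap.ker_comp, ker_mkQ] at h
  have := W.finrank_quotient_add_finrank
  have := S.finrank_quotient_add_finrank
  omega

theorem isModularRank_finrank [FiniteDimensional R V] :
    IsModularRank fun W : Submodule R V => (finrank R W : ℤ) where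
  strictMono _ _ h := Nat.cast_lt.2 (Submodule.finrank_strictMono h)
  sup_add_inf x y := by exact_mod_cast Submodule.finrank_sup_add_finrank_inf_eq x y

theorem isModularRank_neg_finrank_ofDual [FiniteDimensional R V] :
    IsModularRank fun W : (Submodule R V)ᵒᵈ => -(finrank R ↥(OrderDual.ofDual W) : ℤ) where
  strictMono _ _ h := neg_lt_neg (Nat.cast_lt.2 (Submodule.finrank_strictMono h))
  sup_add_inf x y := by
    have := Submodule.finrank_sup_add_finrank_inf_eq (OrderDual.ofDual x) (OrderDual.ofDual y)
    rw [ofDual_sup, ofDual_inf]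
    omega

theorem isFreeSpan_comap_mkQ_span [FiniteDimensional R V] (S : Submodule R V) {n m : ℕ}
    {x : Fin n → V ⧸ S} (hx : MIndep R m x) (hmn : m ≤ n) :
    IsFreeSpan (fun W : Submodule R V => (finrank R W : ℤ)) (finrank R S) m
      (fun A : Finset (Fin n) => comap S.mkQ (span R (x '' ↑A))) where
  map_union A B := by rw [Finset.coe_union, Set.image_union, span_union, comap_mkQ_sup]
  rank_map T hT := by
    rw [finrank_comap_mkQ, (hx.linearIndepOn hmn hT).finrank_span_image]
    push_cast
    rfl

theorem LinearMap.pi_surjective_of_linearIndependent {ι : Type*} [Fintype ι] [DecidableEq ι]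
    {y : ι → V →ₗ[R] R} (hy : LinearIndependent Rᵐᵒᵖ y) : Surjective (LinearMap.pi y) := by
  rw [← LinearMap.range_eq_top]
  by_contra hne
  obtain ⟨w, hw0, hw⟩ := exists_dual_map_eq_bot_of_lt_top (lt_top_iff_ne_top.2 hne)
    inferInstance
  have hwy : ∀ u, w (LinearMap.pi y u) = 0 := fun u =>
    (mem_bot R).1 (hw ▸ mem_map_of_mem (LinearMap.mem_range_self _ u))
  have hsum : ∑ i, MulOpposite.op (w fun j => if i = j then 1 else 0) • y i = 0 := by
    ext u
    simpa [LinearMap.pi_apply_eq_sum_univ w (LinearMap.pi y u)] using hwy u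
  have hcoef := Fintype.linearIndependent_iff.1 hy _ hsum
  refine hw0 (LinearMap.ext fun v => ?_)
  rw [LinearMap.pi_apply_eq_sum_univ w v]
  simp [(MulOpposite.op_eq_zero_iff _).1 (hcoef _)]

theorem LinearIndepOn.finrank_iInf_ker_add_card [FiniteDimensional R V] {ι : Type*}
    [DecidableEq ι] {y : ι → V →ₗ[R] R} {T : Finset ι} (hy : LinearIndepOn Rᵐᵒᵖ y ↑T) :
    finrank R ↥(⨅ i ∈ T, LinearMap.ker (y i)) + T.card = finrank R V := by
  have h := LinearMap.finrank_range_add_finrank_ker (LinearMap.pi fun i : (↑T : Set ι) => y i)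
  rw [LinearMap.range_eq_top.2 (LinearMap.pi_surjective_of_linearIndependent hy), finrank_top,
    LinearMap.ker_pi, iInf_subtype'' (↑T : Set ι) fun i => LinearMap.ker (y i),
    Module.finrank_fintype_fun_eq_card] at h
  simp only [Finset.coe_sort_coe, Fintype.card_coe] at h
  exact (add_comm _ _).trans h

theorem isFreeSpan_map_subtype_iInf_ker [FiniteDimensional R V] (U : Submodule R V) {n m : ℕ}
    {y : Fin n → U →ₗ[R] R} (hy : MIndep Rᵐᵒᵖ m y) (hmn : m ≤ n) :
    IsFreeSpan (fun W : (Submodule R V)ᵒᵈ => -(finrank R ↥(OrderDual.ofDual W) : ℤ))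
      (-(finrank R U : ℤ)) m
      (fun A => OrderDual.toDual (map U.subtype (⨅ i ∈ A, LinearMap.ker (y i)))) where
  map_union A B := by
    rw [Finset.iInf_union, map_inf _ U.injective_subtype]
    rfl
  rank_map T hT := by
    have := (hy.linearIndepOn hmn hT).finrank_iInf_ker_add_card
    rw [OrderDual.ofDual_toDual, finrank_map_subtype_eq]
    omega

end LinearAlgebra

theorem Grass.ncard_inter_setOf {R V ι : Type*} [DivisionRing R] [AddCommGroup V] [Module R V]
    {k k' : ℕ} {F : Finset ι → Submodule R V} (hF : InjOn F {A | A.card = k})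
    (hrank : ∀ A : Finset ι, A.card = k → finrank R ↥(F A) = k') (p : Submodule R V → Prop) :
    ({P : Grass R V k' | ∃ A : Finset ι, A.card = k ∧ P.1 = F A} ∩ {P | p P.1}).ncard =
      {A : Finset ι | A.card = k ∧ p (F A)}.ncard := by
  have hval : Injective fun P : Grass R V k' => P.1 := fun _ _ h => Subtype.ext h
  rw [← ncard_image_of_injective _ hval, ← (hF.mono fun A hA => hA.1).ncard_image]
  congr 1
  ext W
  constructor
  · rintro ⟨P, ⟨⟨A, hA, hPA⟩, hp⟩, rfl⟩
    exact ⟨A, ⟨hA, hPA ▸ hp⟩, hPA.symm⟩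
  · rintro ⟨A, ⟨hA, hp⟩, rfl⟩
    exact ⟨⟨F A, hrank A hA⟩, ⟨⟨A, hA, rfl⟩, hp⟩, rfl⟩

theorem IsJSubset.nonempty {R V : Type*} [DivisionRing R] [AddCommGroup V] [Module R V]
    {n k k' : ℕ} {J : Set (Grass R V k')} (hJ : IsJSubset R V n k k' J) (hkn : k ≤ n) :
    J.Nonempty := by
  obtain ⟨g, -, -, rfl⟩ := hJ
  obtain ⟨A, -, hA⟩ := Finset.exists_subset_card_eq (s := Finset.univ (α := Fin n)) (n := k)
    (by simpa using hkn)
  exact ⟨g ⟨A, hA⟩, mem_range_self _⟩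

section JSubsetTypes

variable {R V : Type*} [DivisionRing R] [AddCommGroup V] [Module R V] [FiniteDimensional R V]
  {n k k' : ℕ} {J : Set (Grass R V k')}

theorem IsFirstType.ncard_star_top (hJ : IsFirstType R V n k k' J) (hne : J.Nonempty)
    (hk : 1 < k) (h2kn : 2 * k ≤ n) :
    (∀ S : Submodule R V, finrank R ↥S = k' - 1 → 2 ≤ (J ∩ {P | S ≤ P.1}).ncard →
      (J ∩ {P | S ≤ P.1}).ncard = n - k + 1) ∧
    (∀ U : Submodule R V, finrank R ↥U = k' + 1 → 2 ≤ (J ∩ {P | P.1 ≤ U}).ncard →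
      (J ∩ {P | P.1 ≤ U}).ncard = k + 1) := by
  obtain ⟨S₀, -, x, -, hx, rfl⟩ := hJ
  have hρ := isModularRank_finrank (R := R) (V := V)
  have hf := isFreeSpan_comap_mkQ_span S₀ hx h2kn
  have hrank : ∀ A : Finset (Fin n), A.card = k →
      finrank R ↥(comap S₀.mkQ (span R (x '' ↑A))) = finrank R S₀ + k := fun A hA => by
    have := hf.rank_map A (by omega)
    rw [hA] at this
    exact_mod_cast this
  obtain ⟨P, A, hA, hPA⟩ := hne
  have hk' : finrank R S₀ + k = k' := (hrank A hA).symm.trans (hPA ▸ P.2)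
  subst hk'
  have hinj := hf.injOn hρ (k := k) (by omega)
  refine ⟨fun S hS h2 => ?_, fun U hU h2 => ?_⟩
  · rw [Grass.ncard_inter_setOf hinj hrank (S ≤ ·)] at h2 ⊢
    simpa using hf.ncard_star hρ le_rfl (S := S) (by omega) h2
  · rw [Grass.ncard_inter_setOf hinj hrank (· ≤ U)] at h2 ⊢
    exact hf.ncard_top hρ le_rfl (by omega) (by omega) h2

theorem IsSecondType.ncard_star_top (hJ : IsSecondType R V n k k' J) (hk : 1 < k)
    (h2kn : 2 * k ≤ n) :
    (∀ S : Submodule R V, finrank R ↥S = k' - 1 → 2 ≤ (J ∩ {P | S ≤ P.1}).ncard →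
      (J ∩ {P | S ≤ P.1}).ncard = k + 1) ∧
    (∀ U : Submodule R V, finrank R ↥U = k' + 1 → 2 ≤ (J ∩ {P | P.1 ≤ U}).ncard →
      (J ∩ {P | P.1 ≤ U}).ncard = n - k + 1) := by
  obtain ⟨U₀, hU₀, y, -, hy, rfl⟩ := hJ
  have hρ := isModularRank_neg_finrank_ofDual (R := R) (V := V)
  have hf := isFreeSpan_map_subtype_iInf_ker U₀ hy h2kn
  have hrank : ∀ A : Finset (Fin n), A.card = k →
      finrank R ↥(map U₀.subtype (⨅ i ∈ A, LinearMap.ker (y i))) = k' := fun A hA => by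
    have := hf.rank_map A (by omega)
    rw [OrderDual.ofDual_toDual] at this
    omega
  -- a `2k`-element set has rank `-(k' + k) + 2k ≤ 0`
  have hkk' : k ≤ k' := by
    obtain ⟨T, -, hT⟩ := Finset.exists_subset_card_eq (s := Finset.univ (α := Fin n))
      (n := 2 * k) (by simpa using h2kn)
    have := hf.rank_map T hT.le
    omega
  have hinj : InjOn (fun A : Finset (Fin n) => map U₀.subtype (⨅ i ∈ A, LinearMap.ker (y i)))
      {A | A.card = k} := fun _ hA _ hB h => hf.injOn hρ (k := k) (by omega) hA hB h
  refine ⟨fun S hS h2 => ?_, fun U hU h2 => ?_⟩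
  · rw [Grass.ncard_inter_setOf hinj hrank (S ≤ ·)] at h2 ⊢
    exact hf.ncard_top hρ le_rfl (by omega) (U := OrderDual.toDual S)
      (by rw [OrderDual.ofDual_toDual]; omega) h2
  · rw [Grass.ncard_inter_setOf hinj hrank (· ≤ U)] at h2 ⊢
    simpa using hf.ncard_star hρ le_rfl (S := OrderDual.toDual U)
      (by rw [OrderDual.ofDual_toDual]; omega) h2

end JSubsetTypes

theorem star_top_card_of_type_general
    {R' V' : Type*} [DivisionRing R'] [AddCommGroup V'] [Module R' V']
    [FiniteDimensional R' V'] (n k k' : ℕ)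
    (hk : 1 < k) (hkn : k < n - k)
    (J : Set (Grass R' V' k')) (hJ : IsJSubset R' V' n k k' J) :
    (IsFirstType R' V' n k k' J →
      (∀ S : Submodule R' V', Module.finrank R' ↥S = k' - 1 →
        2 ≤ (J ∩ {P : Grass R' V' k' | S ≤ P.1}).ncard →
        (J ∩ {P : Grass R' V' k' | S ≤ P.1}).ncard = n - k + 1) ∧
      (∀ U : Submodule R' V', Module.finrank R' ↥U = k' + 1 →
        2 ≤ (J ∩ {P : Grass R' V' k' | P.1 ≤ U}).ncard →
        (J ∩ {P : Grass R' V' k' | P.1 ≤ U}).ncard = k + 1)) ∧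
    (IsSecondType R' V' n k k' J →
      (∀ S : Submodule R' V', Module.finrank R' ↥S = k' - 1 →
        2 ≤ (J ∩ {P : Grass R' V' k' | S ≤ P.1}).ncard →
        (J ∩ {P : Grass R' V' k' | S ≤ P.1}).ncard = k + 1) ∧
      (∀ U : Submodule R' V', Module.finrank R' ↥U = k' + 1 →
        2 ≤ (J ∩ {P : Grass R' V' k' | P.1 ≤ U}).ncard →
        (J ∩ {P : Grass R' V' k' | P.1 ≤ U}).ncard = n - k + 1)) :=
  ⟨fun h => h.ncard_star_top (hJ.nonempty (by omega)) hk (by omega),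
    fun h => h.ncard_star_top hk (by omega)⟩

/-- Let `J` be a `J(n,k)`-subset of `G_{k'}(V')` with `1 < k < n - k`.
If `J` is of first type then its stars consist of `n-k+1` elements and its tops of `k+1`
elements; if `J` is of second type then its stars consist of `k+1` elements and its tops
of `n-k+1` elements. Here a star (resp. top) of `Γ_{k'}(V')` is the set of `k'`-dimensional
subspaces containing a fixed `(k'-1)`-dimensional subspace (resp. contained in a fixed
`(k'+1)`-dimensional subspace). -/
theorem star_top_card_of_type
    {R' V' : Type*} [DivisionRing R'] [AddCommGroup V'] [Module R' V']
    [FiniteDimensional R' V'] (n n' k k' : ℕ) (hV' : Module.finrank R' V' = n')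
    (hk : 1 < k) (hkn : k < n - k)
    (J : Set (Grass R' V' k')) (hJ : IsJSubset R' V' n k k' J) :
    (IsFirstType R' V' n k k' J →
      (∀ S : Submodule R' V', Module.finrank R' ↥S = k' - 1 →
        2 ≤ (J ∩ {P : Grass R' V' k' | S ≤ P.1}).ncard →
        (J ∩ {P : Grass R' V' k' | S ≤ P.1}).ncard = n - k + 1) ∧
      (∀ U : Submodule R' V', Module.finrank R' ↥U = k' + 1 →
        2 ≤ (J ∩ {P : Grass R' V' k' | P.1 ≤ U}).ncard →
        (J ∩ {P : Grass R' V' k' | P.1 ≤ U}).ncard = k + 1)) ∧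
    (IsSecondType R' V' n k k' J →
      (∀ S : Submodule R' V', Module.finrank R' ↥S = k' - 1 →
        2 ≤ (J ∩ {P : Grass R' V' k' | S ≤ P.1}).ncard →
        (J ∩ {P : Grass R' V' k' | S ≤ P.1}).ncard = k + 1) ∧
      (∀ U : Submodule R' V', Module.finrank R' ↥U = k' + 1 →
        2 ≤ (J ∩ {P : Grass R' V' k' | P.1 ≤ U}).ncard →
        (J ∩ {P : Grass R' V' k' | P.1 ≤ U}).ncard = n - k + 1)) :=
  star_top_card_of_type_general n k k' hk hkn J hJ
end

section
/- Let k ≥ 2, n ≥ 2k, and let X = {x_1,…,x_n} be a (2k)-independent subset of a vector space W over a division ring, with dim W ≥ 2k. Then every inexact subset of J_k(X) is contained in a special subset of J_k(X). -/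
open Submodule Set Function Module

/-- The special subset `J(+i,+j) ∪ J(-i)` of `J = J_k(X)`: all members of `J` which either
contain both `x i` and `x j`, or do not contain `x i`. -/
def SpecialSubset (R : Type*) {W : Type*} [DivisionRing R] [AddCommGroup W] [Module R W]
    {n : ℕ} (k : ℕ) (x : Fin n → W) (i j : Fin n) : Set (Submodule R W) :=
  {P | P ∈ JkSet R k x ∧ ((x i ∈ P ∧ x j ∈ P) ∨ x i ∉ P)}

/-- A subset `Z` of `J = J_k(X)` is inexact if there is a `(2k)`-independent `n`-element
family `y` with `J_k(Y) ≠ J` and `Z ⊆ J_k(Y)`. -/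
def InexactIn (R : Type*) {W : Type*} [DivisionRing R] [AddCommGroup W] [Module R W]
    (n k : ℕ) (J : Set (Submodule R W)) (Z : Set (Submodule R W)) : Prop :=
  ∃ y : Fin n → W, Function.Injective y ∧ MIndep R (2 * k) y ∧
    JkSet R k y ≠ J ∧ Z ⊆ JkSet R k y

/-! Suppose `Z ⊆ J_k(X) ∩ J_k(Y)` lies in no special subset: for all `i ≠ j` some member of `Z`
contains `x i` but not `x j`. By `2k`-independence, an intersection of members of `J_k(X)` is
spanned by the `x j` it contains, so the members of `Z` through `x i` meet exactly in the line
`⟨x i⟩`. Read in `J_k(Y)`, the same intersection is spanned by some of the `y b`, so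
`⟨x i⟩ = ⟨y (σ i)⟩` for a map `σ`, which is injective, hence a permutation. Then every span of
`k` of the `x i` is a span of `k` of the `y b` and conversely, i.e. `J_k(X) = J_k(Y)`. -/

theorem LinearIndepOn.span_image_inter {R M ι : Type*} [Ring R] [AddCommGroup M] [Module R M]
    {v : ι → M} {u s t : Set ι} (hv : LinearIndepOn R v u) (hs : s ⊆ u) (ht : t ⊆ u) :
    span R (v '' (s ∩ t)) = span R (v '' s) ⊓ span R (v '' t) := by
  refine le_antisymm (le_inf (span_mono (image_mono inter_subset_left))
    (span_mono (image_mono inter_subset_right))) ?_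
  rintro w ⟨hws, hwt⟩
  obtain ⟨l, hl, rfl⟩ := (Finsupp.mem_span_image_iff_linearCombination R).mp hws
  obtain ⟨l', hl', hll'⟩ := (Finsupp.mem_span_image_iff_linearCombination R).mp hwt
  obtain rfl : l' = l := linearIndepOn_iffₛ.mp hv l' (Finsupp.supported_mono ht hl')
    l (Finsupp.supported_mono hs hl) hll'
  exact (Finsupp.mem_span_image_iff_linearCombination R).mpr
    ⟨l', by rw [Finsupp.supported_inter]; exact ⟨hl, hl'⟩, rfl⟩

section VectorSpace

variable {K W : Type*} [DivisionRing K] [AddCommGroup W] [Module K W]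

theorem span_singleton_eq_of_mem_of_ne_zero {v w : W} (h : v ∈ K ∙ w) (hv : v ≠ 0) :
    (K ∙ v) = K ∙ w := by
  obtain ⟨c, rfl⟩ := mem_span_singleton.mp h
  exact span_singleton_smul_eq (IsUnit.mk0 c (by rintro rfl; simp at hv)) w

section JkSet

variable {n : ℕ} (k : ℕ) (x : Fin n → W)

theorem finite_JkSet : (JkSet K k x).Finite :=
  (Set.finite_range fun A : Finset (Fin n) => span K (x '' ↑A)).subset
    (by rintro _ ⟨A, -, rfl⟩; exact ⟨A, rfl⟩)

theorem JkSet_comp_equiv (e : Fin n ≃ Fin n) : JkSet K k (x ∘ e) = JkSet K k x := by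
  have key : ∀ (y : Fin n → W) (e : Fin n ≃ Fin n), JkSet K k (y ∘ e) ⊆ JkSet K k y := by
    rintro y e _ ⟨A, hA, rfl⟩
    exact ⟨A.map e.toEmbedding, by rw [Finset.card_map, hA], by
      rw [Finset.coe_map, Equiv.coe_toEmbedding, Set.image_comp]⟩
  refine (key x e).antisymm ?_
  simpa [Function.comp_assoc] using key (x ∘ e) e.symm

variable {k x}

theorem JkSet_eq_of_span_singleton_eq {y : Fin n → W} (h : ∀ i, (K ∙ y i) = K ∙ x i) :
    JkSet K k y = JkSet K k x := by
  have hspan : ∀ A : Finset (Fin n), span K (y '' ↑A) = span K (x '' ↑A) := by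
    intro A
    simp only [Set.image_eq_iUnion, span_iUnion, h]
  ext P
  simp only [JkSet, mem_ofPred_eq, hspan]

end JkSet

namespace MIndep

variable {n m k : ℕ} {x : Fin n → W}

theorem linearIndepOn_s2 (hx : MIndep K m x) (hm : m ≤ n) {A : Finset (Fin n)}
    (hA : A.card ≤ m) : LinearIndepOn K x ↑A := by
  obtain ⟨B, hAB, -, hB⟩ :=
    Finset.exists_subsuperset_card_eq (Finset.subset_univ A) hA (by simpa using hm)
  exact LinearIndepOn.mono (hx B hB) (by exact_mod_cast hAB)

theorem mem_span_image_iff (hx : MIndep K m x) (hm : m ≤ n) {A : Finset (Fin n)}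
    (hA : A.card < m) {i : Fin n} : x i ∈ span K (x '' ↑A) ↔ i ∈ A := by
  rw [(hx.linearIndepOn_s2 hm hA.le).mem_span_iff, Finset.mem_coe]
  refine ⟨fun h => h ?_, fun h _ => h⟩
  simpa using hx.linearIndepOn_s2 hm (A := insert i A) ((Finset.card_insert_le _ _).trans hA)

theorem ne_zero (hx : MIndep K m x) (hm : m ≤ n) (hm0 : 0 < m) (i : Fin n) : x i ≠ 0 :=
  (hx.linearIndepOn_s2 hm (A := {i}) (by simp; omega)).ne_zero (by simp)

theorem span_singleton_injective (hx : MIndep K m x) (hm : m ≤ n) (hm2 : 2 ≤ m) :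
    Injective fun i => K ∙ x i := by
  intro i j hij
  replace hij : (K ∙ x i) = K ∙ x j := hij
  have hi : x i ∈ span K (x '' ↑({j} : Finset (Fin n))) := by
    rw [Finset.coe_singleton, Set.image_singleton, ← hij]
    exact mem_span_singleton_self _
  simpa using (hx.mem_span_image_iff hm (by simp; omega)).mp hi

theorem span_image_inter (hx : MIndep K m x) (hm : m ≤ n) {A B : Finset (Fin n)}
    (hAB : (A ∪ B).card ≤ m) :
    span K (x '' ↑(A ∩ B)) = span K (x '' ↑A) ⊓ span K (x '' ↑B) := by
  rw [Finset.coe_inter]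
  exact (hx.linearIndepOn_s2 hm hAB).span_image_inter (by simp) (by simp)

theorem exists_sInf_eq_span_image (hx : MIndep K m x) (hm : m ≤ n) (hk : 2 * k ≤ m)
    {S : Set (Submodule K W)} (hne : S.Nonempty) (hS : S ⊆ JkSet K k x) :
    ∃ C : Finset (Fin n), C.card ≤ k ∧ sInf S = span K (x '' ↑C) := by
  have hfin : S.Finite := (finite_JkSet k x).subset hS
  let spans : Set (Submodule K W) :=
    {P | ∃ C : Finset (Fin n), C.card ≤ k ∧ P = span K (x '' ↑C)}
  have hspans : ∀ P ∈ spans, ∀ Q ∈ spans, P ⊓ Q ∈ spans := by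
    rintro _ ⟨A, hA, rfl⟩ _ ⟨B, hB, rfl⟩
    exact ⟨A ∩ B, (Finset.card_le_card Finset.inter_subset_left).trans hA,
      (hx.span_image_inter hm ((Finset.card_union_le A B).trans (by omega))).symm⟩
  have hmem := Finset.inf'_mem spans hspans hfin.toFinset (by simpa using hne) id fun P hP => by
    obtain ⟨A, hA, rfl⟩ := hS (hfin.mem_toFinset.mp hP)
    exact ⟨A, hA.le, rfl⟩
  rwa [Finset.inf'_eq_inf, Finset.inf_id_eq_sInf, Set.Finite.coe_toFinset] at hmem

theorem exists_mem_sInf_of_ne_bot (hx : MIndep K m x) (hm : m ≤ n) (hk : 2 * k ≤ m)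
    {S : Set (Submodule K W)} (hne : S.Nonempty) (hS : S ⊆ JkSet K k x) (h0 : sInf S ≠ ⊥) :
    ∃ b, x b ∈ sInf S := by
  obtain ⟨C, -, hInf⟩ := hx.exists_sInf_eq_span_image hm hk hne hS
  obtain ⟨b, hb⟩ : C.Nonempty := by
    rw [Finset.nonempty_iff_ne_empty]
    rintro rfl
    simp [hInf] at h0
  exact ⟨b, hInf ▸ subset_span (mem_image_of_mem x hb)⟩

end MIndep

section Separating

variable {n m k : ℕ} {x y : Fin n → W} {Z : Set (Submodule K W)}

theorem exists_mem_notMem_of_not_subset_specialSubset {i j : Fin n} (hZ : Z ⊆ JkSet K k x)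
    (h : ¬Z ⊆ SpecialSubset K k x i j) :
    ∃ P ∈ Z, x i ∈ P ∧ x j ∉ P := by
  obtain ⟨P, hPZ, hP⟩ := Set.not_subset.mp h
  simp only [SpecialSubset, mem_ofPred_eq, hZ hPZ, true_and, not_or, not_and, not_not] at hP
  exact ⟨P, hPZ, hP.2, hP.1 hP.2⟩

theorem sInf_setOf_mem_eq_span_singleton (hx : MIndep K m x) (hm : m ≤ n) (hk : 2 * k ≤ m)
    (hk0 : 0 < k) (hZ : Z ⊆ JkSet K k x) {i : Fin n} (hne : {P ∈ Z | x i ∈ P}.Nonempty)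
    (hsep : ∀ j ≠ i, ∃ P ∈ Z, x i ∈ P ∧ x j ∉ P) :
    sInf {P ∈ Z | x i ∈ P} = K ∙ x i := by
  obtain ⟨C, hC, hInf⟩ := hx.exists_sInf_eq_span_image hm hk hne fun P hP => hZ hP.1
  have hmem : ∀ j, x j ∈ sInf {P ∈ Z | x i ∈ P} ↔ j = i := by
    refine fun j => ⟨fun h => ?_, by rintro rfl; exact Submodule.mem_sInf.mpr fun P hP => hP.2⟩
    by_contra hji
    obtain ⟨P, hPZ, hPi, hPj⟩ := hsep j hji
    exact hPj (Submodule.mem_sInf.mp h P ⟨hPZ, hPi⟩)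
  have hCi : C = {i} := by
    ext j
    rw [← hx.mem_span_image_iff hm (by omega), ← hInf, hmem, Finset.mem_singleton]
  rw [hInf, hCi, Finset.coe_singleton, Set.image_singleton]

theorem exists_span_singleton_eq (hx : MIndep K m x) (hy : MIndep K m y) (hm : m ≤ n)
    (hk : 2 * k ≤ m) (hk0 : 0 < k) (hZx : Z ⊆ JkSet K k x) (hZy : Z ⊆ JkSet K k y) {i : Fin n}
    (hne : {P ∈ Z | x i ∈ P}.Nonempty) (hsep : ∀ j ≠ i, ∃ P ∈ Z, x i ∈ P ∧ x j ∉ P) :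
    ∃ b, (K ∙ y b) = K ∙ x i := by
  have hInf := sInf_setOf_mem_eq_span_singleton hx hm hk hk0 hZx hne hsep
  obtain ⟨b, hb⟩ := hy.exists_mem_sInf_of_ne_bot hm hk hne (fun P hP => hZy hP.1)
    (by simpa [hInf] using hx.ne_zero hm (by omega) i)
  exact ⟨b, span_singleton_eq_of_mem_of_ne_zero (hInf ▸ hb) (hy.ne_zero hm (by omega) b)⟩

end Separating

end VectorSpace

theorem inexact_subset_special_general
    {K W : Type*} [DivisionRing K] [AddCommGroup W] [Module K W]
    (n k : ℕ) (hk : 2 ≤ k) (hn : 2 * k ≤ n)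
    (x : Fin n → W) (hx : MIndep K (2 * k) x)
    (Z : Set (Submodule K W)) (hZJ : Z ⊆ JkSet K k x)
    (hZ : InexactIn K n k (JkSet K k x) Z) :
    ∃ i j : Fin n, i ≠ j ∧ Z ⊆ SpecialSubset K k x i j := by
  by_contra! hcon
  obtain ⟨y, -, hy, hne, hZY⟩ := hZ
  have hsep : ∀ i, ∀ j ≠ i, ∃ P ∈ Z, x i ∈ P ∧ x j ∉ P := fun i j hji =>
    exists_mem_notMem_of_not_subset_specialSubset hZJ (hcon i j hji.symm)
  have hZi : ∀ i, {P ∈ Z | x i ∈ P}.Nonempty := by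
    have : Nontrivial (Fin n) := Fin.nontrivial_iff_two_le.mpr (by omega)
    intro i
    obtain ⟨j, hji⟩ := exists_ne i
    obtain ⟨P, hPZ, hPi, -⟩ := hsep i j hji
    exact ⟨P, hPZ, hPi⟩
  choose σ hσ using fun i =>
    exists_span_singleton_eq hx hy hn le_rfl (by omega) hZJ hZY (hZi i) (hsep i)
  have hσ_inj : Injective σ := fun i j h =>
    hx.span_singleton_injective hn (by omega) (by simp only [← hσ, h])
  apply hne
  rw [← JkSet_comp_equiv k y (Equiv.ofBijective σ (Finite.injective_iff_bijective.mp hσ_inj))]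
  exact JkSet_eq_of_span_singleton_eq hσ

/-- Every inexact subset of `J_k(X)` is contained in a special subset. -/
theorem inexact_subset_special
    {K W : Type*} [DivisionRing K] [AddCommGroup W] [Module K W]
    (n k : ℕ) (hk : 2 ≤ k) (hn : 2 * k ≤ n)
    (hW : ((2 * k : ℕ) : Cardinal) ≤ Module.rank K W)
    (x : Fin n → W) (hxinj : Function.Injective x) (hx : MIndep K (2 * k) x)
    (Z : Set (Submodule K W)) (hZJ : Z ⊆ JkSet K k x)
    (hZ : InexactIn K n k (JkSet K k x) Z) :
    ∃ i j : Fin n, i ≠ j ∧ Z ⊆ SpecialSubset K k x i j :=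
  inexact_subset_special_general n k hk hn x hx Z hZJ hZ
end

section
/- Let k and n be integers with k ≥ 2 and n ≥ 2k+1, and suppose (n,k) ≠ (5,2). Then k·(C(n−2,k−2) + C(n−1,k)) > n·C(2k−1,k). Moreover, for n = 5 and k = 2 this inequality fails: 2·(C(3,0)+C(4,2)) = 14 < 15 = 5·C(3,2). -/
/-!
Write `c = C(2k-1,k)` and `a(n,k) = specialCount n k`. Passing from `n` to `n+1` raises
`k·a(n,k)` by at least `k·C(n-1,k-1) > C(2k-1,k-1) = c` as soon as `n ≥ 2k`, while `n·c` rises by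
exactly `c`; so the inequality propagates upwards in `n`. It starts at `n = 2k+1` when `k ≥ 3`:
there `C(2k,k) = 2c` and `(k+1)·C(2k-1,k-2) = (k-1)·c`, which reduces the claim to
`k(k-1) > k+1`. For `k = 2` it fails at `n = 5` and starts at `n = 6`.
-/

namespace Nat

def specialCount (n k : ℕ) : ℕ := choose (n - 2) (k - 2) + choose (n - 1) k

theorem choose_two_mul_sub_one_lt_mul_choose {n k : ℕ} (hk : 2 ≤ k) (hn : 2 * k ≤ n) :
    choose (2 * k - 1) k < k * choose (n - 1) (k - 1) := by
  obtain ⟨j, rfl⟩ : ∃ j, k = j + 1 := ⟨k - 1, by omega⟩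
  have hsymm : choose (2 * (j + 1) - 1) (j + 1) = choose (2 * j + 1) j := by
    rw [show 2 * (j + 1) - 1 = 2 * j + 1 by omega, choose_symm_half]
  have hle : choose (2 * j + 1) j ≤ choose (n - 1) j := choose_le_choose j (by omega)
  have hpos : 0 < choose (2 * j + 1) j := choose_pos (by omega)
  rw [hsymm, Nat.add_sub_cancel]
  nlinarith

theorem specialCount_add_choose_le_specialCount_succ {n k : ℕ} (hn : 1 ≤ n) (hk : 1 ≤ k) :
    specialCount n k + choose (n - 1) (k - 1) ≤ specialCount (n + 1) k := by
  have hpascal : choose (n + 1 - 1) k = choose (n - 1) (k - 1) + choose (n - 1) k := by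
    obtain ⟨m, rfl⟩ : ∃ m, n = m + 1 := ⟨n - 1, by omega⟩
    obtain ⟨i, rfl⟩ : ∃ i, k = i + 1 := ⟨k - 1, by omega⟩
    simp only [Nat.add_sub_cancel, choose_succ_succ']
  have hmono : choose (n - 2) (k - 2) ≤ choose (n + 1 - 2) (k - 2) :=
    choose_le_choose _ (by omega)
  unfold specialCount
  omega

theorem mul_choose_lt_mul_specialCount_of_le {n₀ n k : ℕ} (hk : 2 ≤ k) (hn₀ : 2 * k ≤ n₀)
    (hn : n₀ ≤ n) (hbase : n₀ * choose (2 * k - 1) k < k * specialCount n₀ k) :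
    n * choose (2 * k - 1) k < k * specialCount n k := by
  induction n, hn using Nat.le_induction with
  | base => exact hbase
  | succ n hn ih =>
    have hgrowth := choose_two_mul_sub_one_lt_mul_choose hk (hn₀.trans hn)
    have hstep : specialCount n k + choose (n - 1) (k - 1) ≤ specialCount (n + 1) k :=
      specialCount_add_choose_le_specialCount_succ (by omega) (by omega)
    calc (n + 1) * choose (2 * k - 1) k
        = n * choose (2 * k - 1) k + choose (2 * k - 1) k := by ring
      _ < k * specialCount n k + k * choose (n - 1) (k - 1) := by omega
      _ ≤ k * specialCount (n + 1) k := by rw [← Nat.mul_add]; exact Nat.mul_le_mul_left k hstep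

theorem mul_choose_lt_mul_specialCount_two_mul_add_one {k : ℕ} (hk : 3 ≤ k) :
    (2 * k + 1) * choose (2 * k - 1) k < k * specialCount (2 * k + 1) k := by
  obtain ⟨j, rfl⟩ : ∃ j, k = j + 3 := ⟨k - 3, by omega⟩
  have hcentral : choose (2 * j + 6) (j + 3) = 2 * choose (2 * j + 5) (j + 3) := by
    rw [show 2 * j + 6 = (2 * j + 5) + 1 by ring, choose_succ_succ',
      show 2 * j + 5 = 2 * (j + 2) + 1 by ring, choose_symm_half]
    ring
  have hsymm : choose (2 * j + 5) (j + 1) = choose (2 * j + 5) (j + 4) :=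
    choose_symm_of_eq_add (by ring)
  have hratio : choose (2 * j + 5) (j + 4) * (j + 4) = choose (2 * j + 5) (j + 3) * (j + 2) := by
    rw [choose_succ_right_eq, show 2 * j + 5 - (j + 3) = j + 2 by omega]
  have hpos : 0 < choose (2 * j + 5) (j + 3) := choose_pos (by omega)
  unfold specialCount
  rw [show 2 * (j + 3) - 1 = 2 * j + 5 by omega, show 2 * (j + 3) + 1 - 2 = 2 * j + 5 by omega,
    show j + 3 - 2 = j + 1 by omega, show 2 * (j + 3) + 1 - 1 = 2 * j + 6 by omega, hcentral, hsymm]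
  nlinarith

end Nat

/-- For `k ≥ 2`, `n ≥ 2k+1` and `(n,k) ≠ (5,2)` one has
`k·(C(n-2,k-2) + C(n-1,k)) > n·C(2k-1,k)`, i.e. `a(n,k) > b(n,k)`. Moreover, for `n = 5`
and `k = 2` the inequality fails: `2·(C(3,0)+C(4,2)) = 14 < 15 = 5·C(3,2)`. -/
theorem a_gt_b (n k : ℕ) (hk : 2 ≤ k) (hn : 2 * k + 1 ≤ n) (h : ¬(n = 5 ∧ k = 2)) :
    n * Nat.choose (2 * k - 1) k <
      k * (Nat.choose (n - 2) (k - 2) + Nat.choose (n - 1) k) ∧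
    2 * (Nat.choose 3 0 + Nat.choose 4 2) = 14 ∧ (14 : ℕ) < 15 ∧
      5 * Nat.choose 3 2 = 15 := by
  refine ⟨?_, by decide, by norm_num, by decide⟩
  change n * Nat.choose (2 * k - 1) k < k * Nat.specialCount n k
  rcases Nat.lt_or_ge k 3 with hk2 | hk3
  · obtain rfl : k = 2 := by omega
    exact Nat.mul_choose_lt_mul_specialCount_of_le (n₀ := 6) le_rfl (by norm_num) (by omega)
      (by decide)
  · exact Nat.mul_choose_lt_mul_specialCount_of_le (by omega) (by omega) hn
      (Nat.mul_choose_lt_mul_specialCount_two_mul_add_one hk3)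
end

section
/- Let V be an n-dimensional left vector space over a division ring R with n = 2k and k ≥ 2, let V' be an n'-dimensional left vector space over a division ring R' with k ≤ k' and k ≤ n'−k', and let f be a J-mapping of G_k(V) to G_{k'}(V'). Then there exists a (k'−k)-dimensional subspace S of V' such that S ⊆ f(P) for every P ∈ G_k(V). -/
open Submodule Set Function Module

/-!
For a base `b` of `V`, `f` maps the apartment of `b` onto the image of an isometric embedding `g`
of `J(2k, k)` in `Γ_{k'}(V')`. Comparing the two distance formulas gives
`dim (g A ⊓ g B) = k' - k + |A ∩ B|`, so for complementary `A, B` the subspace `g A ⊓ g B` has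
dimension `k' - k` and lies in every `g C`: it is the intersection `S_b` of the whole image.
The correspondence between the apartment and `J(2k, k)` is an arbitrary bijection, so all one
knows is that `S_b = f P ⊓ f Q` for some `P, Q` in any part of the apartment containing more than
half of it. Replacing `b i` by `b i + a • b t` keeps more than half of the apartment (every
subspace avoiding `b i`, and one through `b i` and `b t`, which needs `k ≥ 2`), hence keeps `S_b`;
rescaling and reordering `b` keep the apartment itself. An exchange argument connects any two
bases by such moves, so `S_b` does not depend on `b`, and every `P ∈ G_k(V)` lies in an apartment.
-/

open scoped Finset

namespace SimpleGraph

variable {α : Type*} {G : SimpleGraph α}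

theorem dist_eq_of_step (δ : α → α → ℕ) (h_eq : ∀ {x y}, δ x y = 0 ↔ x = y)
    (h_adj : ∀ {x x' y}, G.Adj x x' → δ x y ≤ δ x' y + 1)
    (h_step : ∀ {x y}, x ≠ y → ∃ x', G.Adj x x' ∧ δ x' y < δ x y) (x y : α) :
    G.dist x y = δ x y := by
  have le_length : ∀ {x y} (p : G.Walk x y), δ x y ≤ p.length := by
    intro x y p
    induction p with
    | nil => exact (h_eq.2 rfl).le
    | cons h p ih => exact (h_adj h).trans (by simpa using ih)
  have exists_walk : ∀ d x, δ x y ≤ d → ∃ p : G.Walk x y, p.length ≤ δ x y := by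
    intro d
    induction d with
    | zero =>
      intro x hx
      obtain rfl := h_eq.1 (Nat.le_zero.1 hx)
      exact ⟨Walk.nil, by simp⟩
    | succ d ih =>
      intro x hx
      by_cases hxy : x = y
      · subst hxy; exact ⟨Walk.nil, by simp⟩
      obtain ⟨x', hadj, hlt⟩ := h_step hxy
      obtain ⟨p, hp⟩ := ih x' (by omega)
      exact ⟨Walk.cons hadj p, by simp; omega⟩
  obtain ⟨p, hp⟩ := exists_walk _ x le_rfl
  obtain ⟨q, hq⟩ := Reachable.exists_walk_length_eq_dist ⟨p⟩
  exact le_antisymm ((dist_le p).trans hp) (hq ▸ le_length q)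

end SimpleGraph

section Grassmann

variable {K W : Type*} [DivisionRing K] [AddCommGroup W] [Module K W] [FiniteDimensional K W]

theorem Submodule.exists_le_le_finrank_eq {Z X : Submodule K W} (hZX : Z ≤ X) {r : ℕ}
    (hZ : finrank K Z ≤ r) (hX : r ≤ finrank K X) :
    ∃ Y : Submodule K W, Z ≤ Y ∧ Y ≤ X ∧ finrank K Y = r := by
  induction r with
  | zero => exact ⟨Z, le_rfl, hZX, Nat.le_zero.1 hZ⟩
  | succ r ih =>
    rcases hZ.eq_or_lt with hZr | hZr
    · exact ⟨Z, le_rfl, hZX, hZr⟩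
    obtain ⟨Y, hZY, hYX, hY⟩ := ih (by omega) (by omega)
    obtain ⟨x, hxX, hxY⟩ := SetLike.exists_of_lt (hYX.lt_of_ne (by rintro rfl; omega))
    refine ⟨Y ⊔ span K {x}, hZY.trans le_sup_left,
      sup_le hYX ((span_singleton_le_iff_mem x X).2 hxX), ?_⟩
    rw [Submodule.finrank_sup_span_singleton hxY, hY]

variable {q : ℕ}

theorem Grass.finrank_le_of_le (X : Grass K W q) {U : Submodule K W} (h : U ≤ X.1) :
    finrank K U ≤ q :=
  (Submodule.finrank_mono h).trans_eq X.2

theorem Grass.finrank_inf_le (X Y : Grass K W q) : finrank K ↥(X.1 ⊓ Y.1) ≤ q :=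
  X.finrank_le_of_le inf_le_left

theorem Grass.eq_of_le_finrank_inf {X Y : Grass K W q} (h : q ≤ finrank K ↥(X.1 ⊓ Y.1)) :
    X = Y := by
  have hX : X.1 ⊓ Y.1 = X.1 := eq_of_le_of_finrank_le inf_le_left (by rw [X.2]; exact h)
  have hY : X.1 ⊓ Y.1 = Y.1 := eq_of_le_of_finrank_le inf_le_right (by rw [Y.2]; exact h)
  exact Subtype.ext (hX.symm.trans hY)

theorem finrank_inf_le_of_grassGraph_adj {X X' : Grass K W q} (h : (grassGraph K W q).Adj X X')
    (Y : Submodule K W) : finrank K ↥(X'.1 ⊓ Y) ≤ finrank K ↥(X.1 ⊓ Y) + 1 := by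
  have hsum := Submodule.finrank_sup_add_finrank_inf_eq (X'.1 ⊓ Y) (X.1 ⊓ X'.1)
  have hsup : finrank K ↥(X'.1 ⊓ Y ⊔ X.1 ⊓ X'.1) ≤ q :=
    X'.finrank_le_of_le (sup_le inf_le_left inf_le_right)
  have hinf : finrank K ↥(X'.1 ⊓ Y ⊓ (X.1 ⊓ X'.1)) ≤ finrank K ↥(X.1 ⊓ Y) :=
    Submodule.finrank_mono
      (le_inf (inf_le_right.trans inf_le_left) (inf_le_left.trans inf_le_right))
  have hq : q ≠ 0 := fun hq ↦ h.1 (Grass.eq_of_le_finrank_inf (by omega))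
  have := h.2
  omega

theorem exists_grassGraph_adj_finrank_inf_lt {X Y : Grass K W q} (hXY : X ≠ Y) :
    ∃ X', (grassGraph K W q).Adj X X' ∧
      finrank K ↥(X.1 ⊓ Y.1) < finrank K ↥(X'.1 ⊓ Y.1) := by
  have hlt : finrank K ↥(X.1 ⊓ Y.1) < q := by
    by_contra! h
    exact hXY (Grass.eq_of_le_finrank_inf h)
  obtain ⟨y, hyY, hyX⟩ := SetLike.not_le_iff_exists.1 fun h : Y.1 ≤ X.1 ↦
    hXY (Grass.eq_of_le_finrank_inf (by rw [inf_eq_right.2 h, Y.2]))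
  obtain ⟨H, hH, hHX, hHr⟩ := Submodule.exists_le_le_finrank_eq (inf_le_left : X.1 ⊓ Y.1 ≤ X.1)
    (r := q - 1) (by omega) (by rw [X.2]; omega)
  have hyH : y ∉ H := fun h ↦ hyX (hHX h)
  let X' : Grass K W q := ⟨H ⊔ span K {y}, by rw [Submodule.finrank_sup_span_singleton hyH]; omega⟩
  have hXX' : X.1 ⊓ X'.1 = H := by
    rw [inf_comm, sup_inf_assoc_of_le _ hHX,
      (Submodule.disjoint_span_singleton_of_notMem hyX).symm.eq_bot, sup_bot_eq]
  refine ⟨X', ⟨fun h ↦ hyX (h ▸ mem_sup_right (mem_span_singleton_self y)), ?_⟩, ?_⟩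
  · rw [hXX', hHr]
  · have hy : y ∉ X.1 ⊓ Y.1 := fun h ↦ hyX h.1
    calc finrank K ↥(X.1 ⊓ Y.1) < finrank K ↥(X.1 ⊓ Y.1 ⊔ span K {y} : Submodule K W) := by
          rw [Submodule.finrank_sup_span_singleton hy]; omega
      _ ≤ _ := Submodule.finrank_mono (sup_le (le_inf (hH.trans le_sup_left) inf_le_right)
          ((span_singleton_le_iff_mem _ _).2 ⟨mem_sup_right (mem_span_singleton_self y), hyY⟩))

theorem grassGraph_dist (X Y : Grass K W q) :
    (grassGraph K W q).dist X Y = q - finrank K ↥(X.1 ⊓ Y.1) := by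
  refine SimpleGraph.dist_eq_of_step (fun X Y : Grass K W q ↦ q - finrank K ↥(X.1 ⊓ Y.1))
    ?_ ?_ ?_ X Y
  · intro X Y
    refine ⟨fun h ↦ Grass.eq_of_le_finrank_inf (by omega), ?_⟩
    rintro rfl
    rw [inf_idem, X.2, Nat.sub_self]
  · intro X X' Y h
    have := finrank_inf_le_of_grassGraph_adj h Y.1
    omega
  · intro X Y hXY
    obtain ⟨X', h, hlt⟩ := exists_grassGraph_adj_finrank_inf_lt hXY
    exact ⟨X', h, by have := Grass.finrank_inf_le X' Y; omega⟩

end Grassmann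

section Johnson

variable {n k : ℕ}

theorem JVertex.card_inter_le (A B : JVertex n k) : #(A.1 ∩ B.1) ≤ k :=
  (Finset.card_le_card Finset.inter_subset_left).trans_eq A.2

theorem JVertex.eq_of_le_card_inter {A B : JVertex n k} (h : k ≤ #(A.1 ∩ B.1)) : A = B := by
  have hA : A.1 ∩ B.1 = A.1 :=
    Finset.eq_of_subset_of_card_le Finset.inter_subset_left (by rw [A.2]; exact h)
  have hB : A.1 ∩ B.1 = B.1 :=
    Finset.eq_of_subset_of_card_le Finset.inter_subset_right (by rw [B.2]; exact h)
  exact Subtype.ext (hA.symm.trans hB)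

theorem card_inter_le_of_johnsonGraph_adj {A A' : JVertex n k} (h : (johnsonGraph n k).Adj A A')
    (B : Finset (Fin n)) : #(A'.1 ∩ B) ≤ #(A.1 ∩ B) + 1 := by
  have hk : k ≠ 0 := fun hk ↦ h.1 (JVertex.eq_of_le_card_inter (by omega))
  have hsdiff : #(A'.1 \ A.1) = 1 := by
    have := Finset.card_inter_add_card_sdiff A'.1 A.1
    rw [Finset.inter_comm, h.2, A'.2] at this
    omega
  calc #(A'.1 ∩ B) ≤ #(A.1 ∩ B ∪ A'.1 \ A.1) := Finset.card_le_card fun x hx ↦ by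
        by_cases hxA : x ∈ A.1 <;> simp_all
    _ ≤ #(A.1 ∩ B) + 1 := hsdiff ▸ Finset.card_union_le _ _

theorem exists_johnsonGraph_adj_card_inter_lt {A B : JVertex n k} (hAB : A ≠ B) :
    ∃ A', (johnsonGraph n k).Adj A A' ∧ #(A.1 ∩ B.1) < #(A'.1 ∩ B.1) := by
  obtain ⟨a, haA, haB⟩ := Finset.not_subset.1 fun h : A.1 ⊆ B.1 ↦
    hAB (JVertex.eq_of_le_card_inter (by rw [Finset.inter_eq_left.2 h, A.2]))
  obtain ⟨b, hbB, hbA⟩ := Finset.not_subset.1 fun h : B.1 ⊆ A.1 ↦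
    hAB (JVertex.eq_of_le_card_inter (by rw [Finset.inter_eq_right.2 h, B.2]))
  have hb : b ∉ A.1.erase a := fun h ↦ hbA (Finset.mem_of_mem_erase h)
  let A' : JVertex n k := ⟨insert b (A.1.erase a), by
    rw [Finset.card_insert_of_notMem hb, Finset.card_erase_of_mem haA, A.2]
    have := A.2 ▸ Finset.card_pos.2 ⟨a, haA⟩
    omega⟩
  have hAA' : A.1 ∩ A'.1 = A.1.erase a := by
    ext x; by_cases hx : x = b <;> by_cases hx' : x = a <;> simp_all [A']
  have hA'B : A'.1 ∩ B.1 = insert b (A.1 ∩ B.1) := by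
    ext x; by_cases hx : x = b <;> by_cases hx' : x = a <;> simp_all [A']
  refine ⟨A', ⟨fun h ↦ hbA (by rw [h]; exact Finset.mem_insert_self b _), ?_⟩, ?_⟩
  · rw [hAA', Finset.card_erase_of_mem haA, A.2]
  · rw [hA'B, Finset.card_insert_of_notMem fun h ↦ hbA (Finset.mem_inter.1 h).1]
    omega

theorem johnsonGraph_dist (A B : JVertex n k) :
    (johnsonGraph n k).dist A B = k - #(A.1 ∩ B.1) := by
  refine SimpleGraph.dist_eq_of_step (fun A B : JVertex n k ↦ k - #(A.1 ∩ B.1)) ?_ ?_ ?_ A B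
  · intro A B
    refine ⟨fun h ↦ JVertex.eq_of_le_card_inter (by omega), ?_⟩
    rintro rfl
    rw [Finset.inter_self, A.2, Nat.sub_self]
  · intro A A' B h
    have := card_inter_le_of_johnsonGraph_adj h B.1
    omega
  · intro A B hAB
    obtain ⟨A', h, hlt⟩ := exists_johnsonGraph_adj_card_inter_lt hAB
    exact ⟨A', h, by have := A'.card_inter_le B; omega⟩

end Johnson

section ComplementPairs

variable {k : ℕ}

def JVertex.compl (A : JVertex (2 * k) k) : JVertex (2 * k) k :=
  ⟨A.1ᶜ, by rw [Finset.card_compl, A.2, Fintype.card_fin]; omega⟩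

theorem JVertex.compl_involutive : Function.Involutive (JVertex.compl (k := k)) :=
  fun A ↦ Subtype.ext (compl_compl A.1)

theorem JVertex.disjoint_compl (A : JVertex (2 * k) k) : Disjoint A.1 A.compl.1 :=
  disjoint_compl_right

instance : Nonempty (JVertex (2 * k) k) :=
  let ⟨A, _, hA⟩ := Finset.exists_subset_card_eq (s := (Finset.univ : Finset (Fin (2 * k))))
    (by simp; omega)
  ⟨⟨A, hA⟩⟩

theorem JVertex.exists_disjoint_of_card_lt {𝒜 : Set (JVertex (2 * k) k)}
    (h𝒜 : Nat.card (JVertex (2 * k) k) < 2 * 𝒜.ncard) :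
    ∃ A ∈ 𝒜, ∃ B ∈ 𝒜, Disjoint A.1 B.1 := by
  by_contra! hcon
  have hdisj : Disjoint 𝒜 (JVertex.compl ⁻¹' 𝒜) :=
    Set.disjoint_left.2 fun A hA hA' ↦ hcon A hA _ hA' A.disjoint_compl
  have hcard := Set.ncard_union_eq hdisj
  rw [Set.ncard_preimage_of_injective_subset_range JVertex.compl_involutive.injective
    (by simp [JVertex.compl_involutive.surjective.range_eq])] at hcard
  have := Set.ncard_le_card (𝒜 ∪ JVertex.compl ⁻¹' 𝒜)
  omega

theorem JVertex.two_mul_ncard_notMem (i : Fin (2 * k)) :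
    2 * {A : JVertex (2 * k) k | i ∉ A.1}.ncard = Nat.card (JVertex (2 * k) k) := by
  have hcompl : {A : JVertex (2 * k) k | i ∉ A.1}ᶜ = JVertex.compl ⁻¹' {A | i ∉ A.1} := by
    ext A; simp [JVertex.compl]
  rw [← Set.ncard_add_ncard_compl {A : JVertex (2 * k) k | i ∉ A.1}, hcompl,
    Set.ncard_preimage_of_injective_subset_range JVertex.compl_involutive.injective
      (by simp [JVertex.compl_involutive.surjective.range_eq])]
  ring

end ComplementPairs

section Isometry

variable {K W : Type*} [DivisionRing K] [AddCommGroup W] [Module K W] [FiniteDimensional K W]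
variable {n k q : ℕ}

theorem finrank_inf_of_isometry {g : JVertex n k → Grass K W q}
    (hg : ∀ A B, (grassGraph K W q).dist (g A) (g B) = (johnsonGraph n k).dist A B)
    (hkq : k ≤ q) (A B : JVertex n k) :
    finrank K ↥((g A).1 ⊓ (g B).1) = q - k + #(A.1 ∩ B.1) := by
  have h := hg A B
  rw [grassGraph_dist, johnsonGraph_dist] at h
  have := (g A).finrank_inf_le (g B)
  have := A.card_inter_le B
  omega

theorem inf_le_of_isometry {g : JVertex (2 * k) k → Grass K W q}
    (hg : ∀ A B, (grassGraph K W q).dist (g A) (g B) = (johnsonGraph (2 * k) k).dist A B)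
    (hkq : k ≤ q) {A B : JVertex (2 * k) k} (hAB : Disjoint A.1 B.1) (C : JVertex (2 * k) k) :
    (g A).1 ⊓ (g B).1 ≤ (g C).1 := by
  -- `A` and `B` are complementary, so `C` meets them in `k` points altogether; this forces
  -- `dim (gC ⊓ gA) + dim (gC ⊓ gB) = 2q - k`, and so `gC ⊇ gA ⊓ gB`.
  have hunion : A.1 ∪ B.1 = Finset.univ :=
    Finset.eq_univ_of_card _ (by rw [Finset.card_union_of_disjoint hAB, A.2, B.2]; simp; ring)
  have hsplit : #(C.1 ∩ A.1) + #(C.1 ∩ B.1) = k := by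
    rw [← Finset.card_union_of_disjoint (hAB.mono Finset.inter_subset_right
      Finset.inter_subset_right), ← Finset.inter_union_distrib_left, hunion, Finset.inter_univ, C.2]
  have hsum := Submodule.finrank_sup_add_finrank_inf_eq ((g C).1 ⊓ (g A).1) ((g C).1 ⊓ (g B).1)
  rw [← inf_inf_distrib_left, finrank_inf_of_isometry hg hkq,
    finrank_inf_of_isometry hg hkq] at hsum
  have hsup := (g C).finrank_le_of_le
    (sup_le (inf_le_left : (g C).1 ⊓ (g A).1 ≤ _) (inf_le_left : (g C).1 ⊓ (g B).1 ≤ _))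
  have hAB' : finrank K ↥((g A).1 ⊓ (g B).1) = q - k := by
    rw [finrank_inf_of_isometry hg hkq, Finset.disjoint_iff_inter_eq_empty.1 hAB]; simp
  have heq : (g C).1 ⊓ ((g A).1 ⊓ (g B).1) = (g A).1 ⊓ (g B).1 :=
    eq_of_le_of_finrank_le inf_le_right (by omega)
  exact heq ▸ inf_le_left

end Isometry

section JSubset

variable {K W : Type*} [DivisionRing K] [AddCommGroup W] [Module K W] {k q : ℕ}

theorem IsJSubset.ncard_eq {n : ℕ} {J : Set (Grass K W q)} (hJ : IsJSubset K W n k q J) :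
    J.ncard = Nat.card (JVertex n k) := by
  obtain ⟨g, hg_inj, -, rfl⟩ := hJ
  exact Set.ncard_range_of_injective hg_inj

variable [FiniteDimensional K W]

theorem iInf_range_eq_inf_of_isometry {g : JVertex (2 * k) k → Grass K W q}
    (hg : ∀ A B, (grassGraph K W q).dist (g A) (g B) = (johnsonGraph (2 * k) k).dist A B)
    (hkq : k ≤ q) {A B : JVertex (2 * k) k} (hAB : Disjoint A.1 B.1) :
    ⨅ Z ∈ range g, Z.1 = (g A).1 ⊓ (g B).1 :=
  le_antisymm (le_inf (biInf_le _ ⟨A, rfl⟩) (biInf_le _ ⟨B, rfl⟩))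
    (le_iInf₂ fun _ ⟨C, hC⟩ ↦ hC ▸ inf_le_of_isometry hg hkq hAB C)

theorem IsJSubset.finrank_iInf {J : Set (Grass K W q)} (hJ : IsJSubset K W (2 * k) k q J)
    (hkq : k ≤ q) : finrank K ↥(⨅ Z ∈ J, Z.1) = q - k := by
  obtain ⟨g, -, hg, rfl⟩ := hJ
  obtain ⟨A⟩ := (inferInstance : Nonempty (JVertex (2 * k) k))
  rw [iInf_range_eq_inf_of_isometry hg hkq A.disjoint_compl, finrank_inf_of_isometry hg hkq,
    Finset.disjoint_iff_inter_eq_empty.1 A.disjoint_compl, Finset.card_empty, add_zero]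

theorem IsJSubset.exists_inf_eq_iInf {J 𝒳 : Set (Grass K W q)}
    (hJ : IsJSubset K W (2 * k) k q J) (hkq : k ≤ q) (h𝒳 : 𝒳 ⊆ J)
    (hcard : Nat.card (JVertex (2 * k) k) < 2 * 𝒳.ncard) :
    ∃ X ∈ 𝒳, ∃ Y ∈ 𝒳, X.1 ⊓ Y.1 = ⨅ Z ∈ J, Z.1 := by
  obtain ⟨g, hg_inj, hg, rfl⟩ := hJ
  rw [← Set.ncard_preimage_of_injective_subset_range hg_inj h𝒳] at hcard
  obtain ⟨A, hA, B, hB, hAB⟩ := JVertex.exists_disjoint_of_card_lt hcard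
  exact ⟨g A, hA, g B, hB, (iInf_range_eq_inf_of_isometry hg hkq hAB).symm⟩

end JSubset

section Apartments

variable {R V : Type*} [DivisionRing R] [AddCommGroup V] [Module R V]

theorem span_image_eq_of_forall_mem {ι : Type*} {x y : ι → V} {s : Set ι}
    (hyx : ∀ j ∈ s, y j ∈ span R (x '' s)) (hxy : ∀ j ∈ s, x j ∈ span R (y '' s)) :
    span R (y '' s) = span R (x '' s) :=
  le_antisymm (span_le.2 (Set.image_subset_iff.2 hyx)) (span_le.2 (Set.image_subset_iff.2 hxy))

variable {ι : Type*} [DecidableEq ι]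

theorem span_image_update_smul (x : ι → V) (i : ι) {a : R} (ha : a ≠ 0) (s : Set ι) :
    span R (update x i (a • x i) '' s) = span R (x '' s) := by
  refine span_image_eq_of_forall_mem (fun j hj ↦ ?_) (fun j hj ↦ ?_)
  · rcases eq_or_ne j i with rfl | hji
    · rw [update_self]
      exact smul_mem _ a (subset_span (mem_image_of_mem x hj))
    · rw [update_of_ne hji]
      exact subset_span (mem_image_of_mem x hj)
  · have hy : update x i (a • x i) j ∈ span R (update x i (a • x i) '' s) :=
      subset_span (mem_image_of_mem _ hj)
    rcases eq_or_ne j i with rfl | hji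
    · rwa [update_self, smul_mem_iff _ ha] at hy
    · rwa [update_of_ne hji] at hy

theorem span_image_update_add_smul (x : ι → V) {i t : ι} (hti : t ≠ i) (a : R) {s : Set ι}
    (hs : i ∈ s → t ∈ s) : span R (update x i (x i + a • x t) '' s) = span R (x '' s) := by
  refine span_image_eq_of_forall_mem (fun j hj ↦ ?_) (fun j hj ↦ ?_)
  · rcases eq_or_ne j i with rfl | hji
    · rw [update_self]
      exact add_mem (subset_span (mem_image_of_mem x hj))
        (smul_mem _ a (subset_span (mem_image_of_mem x (hs hj))))
    · rw [update_of_ne hji]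
      exact subset_span (mem_image_of_mem x hj)
  · have hy : ∀ l ∈ s, update x i (x i + a • x t) l ∈ span R (update x i (x i + a • x t) '' s) :=
      fun l hl ↦ subset_span (mem_image_of_mem _ hl)
    rcases eq_or_ne j i with rfl | hji
    · have := sub_mem (hy j hj) (smul_mem _ a (hy t (hs hj)))
      rwa [update_self, update_of_ne hti, add_sub_cancel_right] at this
    · simpa [update_of_ne hji] using hy j hj

end Apartments

section Apartments

variable {R V : Type*} [DivisionRing R] [AddCommGroup V] [Module R V] {n k : ℕ}

def apartment (b : Basis (Fin n) R V) (k : ℕ) : Set (Grass R V k) :=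
  {P | P.1 ∈ JkSet R k ⇑b}

theorem isApartment_apartment (b : Basis (Fin n) R V) : IsApartment R V n k (apartment b k) :=
  ⟨b, rfl⟩

def coordSubspace (b : Basis (Fin n) R V) (A : JVertex n k) : Grass R V k :=
  ⟨span R (b '' A.1), by
    rw [Set.image_eq_range]
    exact (finrank_span_eq_card (b.linearIndependent.comp _ Subtype.val_injective)).trans
      (by simpa using A.2)⟩

theorem coordSubspace_injective (b : Basis (Fin n) R V) :
    Injective (coordSubspace b : JVertex n k → Grass R V k) := by
  intro A B h
  ext i
  have h' : span R (b '' A.1) = span R (b '' B.1) := congrArg Subtype.val h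
  rw [← Finset.mem_coe, ← Finset.mem_coe, ← b.self_mem_span_image, ← b.self_mem_span_image, h']

theorem apartment_eq_range (b : Basis (Fin n) R V) :
    apartment b k = range (coordSubspace b) := by
  ext P
  constructor
  · rintro ⟨A, hA, hP⟩
    exact ⟨⟨A, hA⟩, Subtype.ext hP.symm⟩
  · rintro ⟨A, rfl⟩
    exact ⟨A.1, A.2, rfl⟩

theorem finite_apartment (b : Basis (Fin n) R V) : (apartment b k).Finite := by
  rw [apartment_eq_range]
  exact Set.finite_range _

theorem ncard_apartment (b : Basis (Fin n) R V) :
    (apartment b k).ncard = Nat.card (JVertex n k) := by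
  rw [apartment_eq_range, Set.ncard_range_of_injective (coordSubspace_injective b)]

theorem apartment_eq_of_span_image_eq {b b' : Basis (Fin n) R V}
    (h : ∀ s : Set (Fin n), span R (b' '' s) = span R (b '' s)) :
    apartment b' k = apartment b k := by
  simp only [apartment, JkSet, h]

theorem apartment_reindex (b : Basis (Fin n) R V) (σ : Fin n ≃ Fin n) :
    apartment (b.reindex σ) k = apartment b k := by
  ext P
  simp only [apartment, JkSet, mem_ofPred_eq, Basis.coe_reindex, Set.image_comp]
  constructor
  · rintro ⟨A, hA, hP⟩
    exact ⟨A.map σ.symm.toEmbedding, by simpa using hA, by simpa using hP⟩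
  · rintro ⟨A, hA, hP⟩
    exact ⟨A.map σ.toEmbedding, by simpa using hA, by simpa [Set.image_image] using hP⟩

end Apartments

section Bases

variable {R V : Type*} [DivisionRing R] [AddCommGroup V] [Module R V]

theorem Module.Basis.exists_update {ι : Type*} [Fintype ι] [DecidableEq ι] (b : Basis ι R V)
    {i : ι} {v : V} (hv : b.repr v i ≠ 0) : ∃ b' : Basis ι R V, ⇑b' = update b i v := by
  have hmem : ∀ j, b j ∈ span R (range (update b i v)) := by
    have hspan : ∀ j ≠ i, b j ∈ span R (range (update b i v)) := fun j hj ↦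
      subset_span ⟨j, update_of_ne hj v b⟩
    intro j
    rcases eq_or_ne j i with rfl | hj
    · have hsum := Finset.add_sum_erase Finset.univ (fun t ↦ b.repr v t • b t) (Finset.mem_univ j)
      rw [b.sum_repr, ← eq_sub_iff_add_eq] at hsum
      rw [← smul_mem_iff _ hv, hsum]
      exact sub_mem (subset_span ⟨j, update_self j v b⟩)
        (sum_mem fun t ht ↦ smul_mem _ _ (hspan t (Finset.ne_of_mem_erase ht)))
    · exact hspan j hj
  refine ⟨basisOfTopLeSpanOfCardEqFinrank _ ?_ (finrank_eq_card_basis b).symm,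
    coe_basisOfTopLeSpanOfCardEqFinrank _ _ _⟩
  rw [← b.span_eq, span_le]
  rintro _ ⟨j, rfl⟩
  exact hmem j

theorem exists_mem_apartment [FiniteDimensional R V] {n k : ℕ} (hV : finrank R V = n)
    (P : Grass R V k) :
    ∃ b : Basis (Fin n) R V, P ∈ apartment b k := by
  obtain ⟨Q, hPQ⟩ := Submodule.exists_isCompl P.1
  have hQ : finrank R Q = n - k := by
    have := Submodule.finrank_add_eq_of_isCompl hPQ
    rw [P.2] at this; omega
  let x : Fin k ⊕ Fin (n - k) → V :=
    Sum.elim (fun i ↦ (finBasisOfFinrankEq R P.1 P.2 i : V)) (fun j ↦ finBasisOfFinrankEq R Q hQ j)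
  have hspan : ∀ (W : Submodule R V) (m : ℕ) (h : finrank R W = m),
      span R (range fun i ↦ (finBasisOfFinrankEq R W h i : V)) = W := by
    intro W m h
    rw [range_comp', ← W.coe_subtype, ← map_span, Basis.span_eq, map_subtype_top]
  have hkn : k ≤ n := hV ▸ P.2 ▸ Submodule.finrank_le P.1
  have hx : ⊤ ≤ span R (range x) := by
    rw [Set.Sum.elim_range, span_union, hspan, hspan, hPQ.sup_eq_top]
  let e : Fin k ⊕ Fin (n - k) ≃ Fin n := finSumFinEquiv.trans (finCongr (by omega))
  let b := (basisOfTopLeSpanOfCardEqFinrank x hx (by simp; omega)).reindex e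
  refine ⟨b, Finset.univ.image (fun i ↦ e (Sum.inl i)), ?_, ?_⟩
  · rw [Finset.card_image_of_injective _ fun i j h ↦ Sum.inl_injective (e.injective h)]
    simp
  · rw [← hspan P.1 k P.2]
    congr 1
    ext y
    simp [b, x]

end Bases

section JMapping

variable {R V R' V' : Type*} [DivisionRing R] [AddCommGroup V] [Module R V]
  [DivisionRing R'] [AddCommGroup V'] [Module R' V'] {n k k' : ℕ}
  (f : Grass R V k → Grass R' V' k')

def apartmentCenter (b : Basis (Fin n) R V) : Submodule R' V' :=
  ⨅ Z ∈ f '' apartment b k, Z.1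

theorem apartmentCenter_le {b : Basis (Fin n) R V} {P : Grass R V k} (hP : P ∈ apartment b k) :
    apartmentCenter f b ≤ (f P).1 :=
  biInf_le _ (mem_image_of_mem f hP)

theorem apartmentCenter_congr {b b' : Basis (Fin n) R V} (h : apartment b' k = apartment b k) :
    apartmentCenter f b' = apartmentCenter f b := by
  rw [apartmentCenter, h, apartmentCenter]

variable {f}

theorem IsJMapping.injOn_apartment (hf : IsJMapping R V R' V' n k k' f)
    (b : Basis (Fin n) R V) : InjOn f (apartment b k) :=
  Set.injOn_of_ncard_image_eq
    (by rw [(hf _ (isApartment_apartment b)).ncard_eq, ncard_apartment]) (finite_apartment b)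

variable [FiniteDimensional R' V']

theorem IsJMapping.finrank_apartmentCenter (hf : IsJMapping R V R' V' (2 * k) k k' f)
    (hkk' : k ≤ k') (b : Basis (Fin (2 * k)) R V) :
    finrank R' ↥(apartmentCenter f b) = k' - k :=
  (hf _ (isApartment_apartment b)).finrank_iInf hkk'

theorem IsJMapping.apartmentCenter_eq_of_card_lt (hf : IsJMapping R V R' V' (2 * k) k k' f)
    (hkk' : k ≤ k') {b c : Basis (Fin (2 * k)) R V}
    (h : Nat.card (JVertex (2 * k) k) < 2 * (apartment b k ∩ apartment c k).ncard) :
    apartmentCenter f c = apartmentCenter f b := by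
  rw [← ((hf.injOn_apartment b).mono inter_subset_left).ncard_image] at h
  obtain ⟨_, ⟨P, hP, rfl⟩, _, ⟨Q, hQ, rfl⟩, hPQ⟩ :=
    (hf _ (isApartment_apartment b)).exists_inf_eq_iInf hkk' (image_mono inter_subset_left) h
  refine eq_of_le_of_finrank_eq ?_
    (by rw [hf.finrank_apartmentCenter hkk', hf.finrank_apartmentCenter hkk'])
  calc apartmentCenter f c ≤ (f P).1 ⊓ (f Q).1 :=
        le_inf (apartmentCenter_le f hP.2) (apartmentCenter_le f hQ.2)
    _ = apartmentCenter f b := hPQ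

theorem IsJMapping.apartmentCenter_update_add_smul (hf : IsJMapping R V R' V' (2 * k) k k' f)
    (hk : 2 ≤ k) (hkk' : k ≤ k') {b b' : Basis (Fin (2 * k)) R V} {i t : Fin (2 * k)}
    (hti : t ≠ i) (a : R) (hb' : ⇑b' = update b i (b i + a • b t)) :
    apartmentCenter f b' = apartmentCenter f b := by
  -- The two apartments share every `coordSubspace` avoiding `i`, which is half of each, and
  -- also one through both `i` and `t`.
  obtain ⟨A₀, hitA₀, -, hA₀⟩ := Finset.exists_subsuperset_card_eq (Finset.subset_univ {i, t})
    ((Finset.card_pair hti.symm).trans_le hk) (by simp; omega)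
  let 𝒜 : Set (JVertex (2 * k) k) := insert ⟨A₀, hA₀⟩ {A | i ∉ A.1}
  have hi𝒜 : ⟨A₀, hA₀⟩ ∉ {A : JVertex (2 * k) k | i ∉ A.1} := by simpa using hitA₀ (by simp)
  have hsame : ∀ A ∈ 𝒜, coordSubspace b' A = coordSubspace b A := by
    rintro A hA
    refine Subtype.ext ((congrArg (span R <| · '' _) hb').trans
      (span_image_update_add_smul _ hti a fun hiA ↦ ?_))
    rcases hA with rfl | hA
    · exact hitA₀ (by simp)
    · exact absurd hiA hA
  have hsub : coordSubspace b '' 𝒜 ⊆ apartment b k ∩ apartment b' k := by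
    rintro _ ⟨A, hA, rfl⟩
    rw [apartment_eq_range, apartment_eq_range]
    exact ⟨⟨A, rfl⟩, ⟨A, hsame A hA⟩⟩
  have hcard : 2 * (coordSubspace b '' 𝒜).ncard = Nat.card (JVertex (2 * k) k) + 2 := by
    rw [Set.ncard_image_of_injective _ (coordSubspace_injective b), Set.ncard_insert_of_notMem hi𝒜,
      mul_add, JVertex.two_mul_ncard_notMem]
  exact hf.apartmentCenter_eq_of_card_lt hkk'
    (by have := Set.ncard_le_ncard hsub ((finite_apartment b).inter_of_left _); omega)

end JMapping

section Exchange

variable {R V R' V' : Type*} [DivisionRing R] [AddCommGroup V] [Module R V]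
  [DivisionRing R'] [AddCommGroup V'] [Module R' V'] [FiniteDimensional R' V'] {k k' : ℕ}
  {f : Grass R V k → Grass R' V' k'}

theorem IsJMapping.apartmentCenter_update (hf : IsJMapping R V R' V' (2 * k) k k' f)
    (hk : 2 ≤ k) (hkk' : k ≤ k') {b b' : Basis (Fin (2 * k)) R V} {i : Fin (2 * k)} {v : V}
    (hv : b.repr v i ≠ 0) (hb' : ⇑b' = update b i v) :
    apartmentCenter f b' = apartmentCenter f b := by
  set c := b.repr v
  -- Rescale `b i` to `c i • b i`, then add the other terms `c t • b t` one transvection at a time.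
  suffices H : ∀ T : Finset (Fin (2 * k)), i ∉ T → ∃ d : Basis (Fin (2 * k)) R V,
      ⇑d = update b i (c i • b i + ∑ t ∈ T, c t • b t) ∧
        apartmentCenter f d = apartmentCenter f b by
    obtain ⟨d, hd, hcenter⟩ := H _ (Finset.notMem_erase i Finset.univ)
    rw [Finset.add_sum_erase _ (fun t ↦ c t • b t) (Finset.mem_univ i), b.sum_repr, ← hb'] at hd
    rwa [DFunLike.coe_injective hd] at hcenter
  intro T
  induction T using Finset.induction_on with
  | empty =>
    intro _
    obtain ⟨d, hd⟩ := b.exists_update (i := i) (v := c i • b i) (by simpa using hv)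
    refine ⟨d, by rw [hd, Finset.sum_empty, add_zero],
      apartmentCenter_congr f (apartment_eq_of_span_image_eq fun s ↦ ?_)⟩
    rw [hd]
    exact span_image_update_smul _ _ hv s
  | insert t T htT ih =>
    intro hi
    obtain ⟨d, hd, hcenter⟩ := ih fun h ↦ hi (Finset.mem_insert_of_mem h)
    have hti : t ≠ i := fun h ↦ hi (h ▸ Finset.mem_insert_self t T)
    obtain ⟨d', hd'⟩ := d.exists_update (i := i) (v := d i + c t • d t) (by simp [hti])
    refine ⟨d', ?_, (hf.apartmentCenter_update_add_smul hk hkk' hti (c t) hd').trans hcenter⟩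
    rw [hd', hd, update_idem, update_self, update_of_ne hti, Finset.sum_insert htT]
    abel_nf

theorem IsJMapping.exists_apartmentCenter_eq_of_agree (hf : IsJMapping R V R' V' (2 * k) k k' f)
    (hk : 2 ≤ k) (hkk' : k ≤ k') {c d : Basis (Fin (2 * k)) R V} {m : Fin (2 * k)}
    (hdc : ∀ j < m, d j = c j) :
    ∃ d' : Basis (Fin (2 * k)) R V,
      apartmentCenter f d' = apartmentCenter f d ∧ ∀ j ≤ m, d' j = c j := by
  obtain ⟨t, hmt, ht⟩ : ∃ t, m ≤ t ∧ d.repr (c m) t ≠ 0 := by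
    by_contra! h
    have hmem : c m ∈ span R (d '' {j | j < m}) :=
      d.mem_span_image.2 fun t ht ↦
        by_contra fun htm ↦ Finsupp.mem_support_iff.1 ht (h t (not_lt.1 htm))
    rw [show d '' {j | j < m} = c '' {j | j < m} from Set.image_congr hdc] at hmem
    exact c.linearIndependent.notMem_span_image (lt_irrefl m) hmem
  let d₁ := d.reindex (Equiv.swap m t)
  have hd₁ : ∀ j < m, d₁ j = d j := fun j hj ↦ by
    simp [d₁, Equiv.swap_apply_of_ne_of_ne hj.ne (hj.trans_le hmt).ne]
  have hd₁m : d₁.repr (c m) m ≠ 0 := by simpa [d₁] using ht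
  obtain ⟨d', hd'⟩ := d₁.exists_update hd₁m
  refine ⟨d', (hf.apartmentCenter_update hk hkk' hd₁m hd').trans
    (apartmentCenter_congr f (apartment_reindex d _)), fun j hj ↦ ?_⟩
  rcases hj.lt_or_eq with hj | rfl
  · rw [hd', update_of_ne hj.ne, hd₁ j hj, hdc j hj]
  · rw [hd', update_self]

theorem IsJMapping.apartmentCenter_eq (hf : IsJMapping R V R' V' (2 * k) k k' f)
    (hk : 2 ≤ k) (hkk' : k ≤ k') (b c : Basis (Fin (2 * k)) R V) :
    apartmentCenter f b = apartmentCenter f c := by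
  suffices H : ∀ m ≤ 2 * k, ∃ d : Basis (Fin (2 * k)) R V,
      apartmentCenter f d = apartmentCenter f b ∧ ∀ j : Fin (2 * k), j < m → d j = c j by
    obtain ⟨d, hd, hdc⟩ := H (2 * k) le_rfl
    rw [← hd, Basis.eq_of_apply_eq fun j ↦ hdc j j.2]
  intro m hm
  induction m with
  | zero => exact ⟨b, rfl, fun j hj ↦ absurd hj (Nat.not_lt_zero _)⟩
  | succ m ih =>
    obtain ⟨d, hd, hdc⟩ := ih (by omega)
    obtain ⟨d', hd', hd'c⟩ :=
      hf.exists_apartmentCenter_eq_of_agree hk hkk' (m := ⟨m, by omega⟩) fun j hj ↦ hdc j hj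
    exact ⟨d', hd'.trans hd, fun j hj ↦ hd'c j (Nat.lt_succ_iff.1 hj)⟩

end Exchange

theorem jMapping_common_subspace_general
    {R V R' V' : Type*} [DivisionRing R] [AddCommGroup V] [Module R V]
    [DivisionRing R'] [AddCommGroup V'] [Module R' V']
    [FiniteDimensional R V] [FiniteDimensional R' V'] (n k k' : ℕ)
    (hV : Module.finrank R V = n)
    (hn : n = 2 * k) (hk : 2 ≤ k) (hkk' : k ≤ k')
    (f : Grass R V k → Grass R' V' k') (hf : IsJMapping R V R' V' n k k' f) :
    ∃ S : Submodule R' V', Module.finrank R' ↥S = k' - k ∧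
      ∀ P : Grass R V k, S ≤ (f P).1 := by
  subst hn
  let b₀ := finBasisOfFinrankEq R V hV
  refine ⟨apartmentCenter f b₀, hf.finrank_apartmentCenter hkk' b₀, fun P ↦ ?_⟩
  obtain ⟨b, hP⟩ := exists_mem_apartment hV P
  rw [hf.apartmentCenter_eq hk hkk' b₀ b]
  exact apartmentCenter_le f hP

/-- If `n = 2k`, `k ≥ 2`, `k ≤ k'` and `k ≤ n' - k'`, then for every
`J`-mapping `f` of `G_k(V)` to `G_{k'}(V')` there is a `(k'-k)`-dimensional subspace `S`
of `V'` contained in `f P` for every `P ∈ G_k(V)`. -/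
theorem jMapping_common_subspace
    {R V R' V' : Type*} [DivisionRing R] [AddCommGroup V] [Module R V]
    [DivisionRing R'] [AddCommGroup V'] [Module R' V']
    [FiniteDimensional R V] [FiniteDimensional R' V'] (n n' k k' : ℕ)
    (hV : Module.finrank R V = n) (hV' : Module.finrank R' V' = n')
    (hn : n = 2 * k) (hk : 2 ≤ k) (hkk' : k ≤ k') (hkn' : k ≤ n' - k')
    (f : Grass R V k → Grass R' V' k') (hf : IsJMapping R V R' V' n k k' f) :
    ∃ S : Submodule R' V', Module.finrank R' ↥S = k' - k ∧
      ∀ P : Grass R V k, S ≤ (f P).1 :=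
  jMapping_common_subspace_general n k k' hV hn hk hkk' f hf
end
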